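/- arXiv:1307.3943 — 8 statements merged into one kernel-verified Lean document; each statement's English description precedes it below -/
import Mathlib

section
/- For every metric space X the following conditions are equivalent: (a) for each r > 0 there is a uniformly bounded cover 𝒰 of X such that every ball B(x,r) intersects only finitely many elements of 𝒰; (b) X is large scale weakly paracompact; (c) for every uniformly bounded cover 𝒰 of X there exists а uniformly bounded point-finite cover 𝒱 of X such that 𝒰 is a refinement of 𝒱. -/
/-- `𝒰` is a cover of `X`. -/
def IsCover {X : Type*} (𝒰 : Set (Set X)) : Prop := ∀ x : X, ∃ U ∈ 𝒰, x ∈ U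

/-- `𝒰` is uniformly bounded: there is `M > 0` bounding the diameters of all members. -/
def UnifBounded {X : Type*} [MetricSpace X] (𝒰 : Set (Set X)) : Prop :=
  ∃ M : ℝ, 0 < M ∧ ∀ U ∈ 𝒰, EMetric.diam U ≤ ENNReal.ofReal M

/-- The Lebesgue number of `𝒰` is at least `s`: every ball `B(x,s)` is contained in some
member of `𝒰`. -/
def LebesgueAtLeast {X : Type*} [MetricSpace X] (s : ℝ) (𝒰 : Set (Set X)) : Prop :=
  ∀ x : X, ∃ U ∈ 𝒰, Metric.ball x s ⊆ U

/-- `𝒰` is point-finite: every point belongs to only finitely many members. -/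
def PointFinite {X : Type*} (𝒰 : Set (Set X)) : Prop :=
  ∀ x : X, {U ∈ 𝒰 | x ∈ U}.Finite

/-- `X` is large scale weakly paracompact: for each `r, s > 0` there is a uniformly bounded
cover of Lebesgue number at least `s` such that every `r`-ball is contained in only finitely
many of its members. -/
def LSWeaklyParacompact (X : Type*) [MetricSpace X] : Prop :=
  ∀ r > (0:ℝ), ∀ s > (0:ℝ), ∃ 𝒰 : Set (Set X), IsCover 𝒰 ∧ UnifBounded 𝒰 ∧
    LebesgueAtLeast s 𝒰 ∧ ∀ x : X, {U ∈ 𝒰 | Metric.ball x r ⊆ U}.Finite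

/-!
Thickening every member of a cover by `s` gives it Lebesgue number `s`, and if `B(x, r)` lies in
the thickening of `U` then `B(x, s)` meets `U`; so (a) at radius `s` gives (b).
Shrinking each member `W` to its core `{y | B(y, r) ⊆ W}` turns "`B(x, r)` lies in `W`" into
"`x` lies in the core", and a Lebesgue number `M + r` lets every set of diameter at most `M`
fit into a core; this gives (b) ⇒ (c). Finally (c), applied to the cover by `r`-balls, yields
a point-finite cover of Lebesgue number `r`, whose `r`-cores witness (a).
-/

open Metric Set

theorem Set.Finite.sep_image_of_imp {α β : Type*} {f : α → β} {s : Set α} {P : β → Prop}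
    {Q : α → Prop} (hQ : {a ∈ s | Q a}.Finite) (h : ∀ a ∈ s, P (f a) → Q a) :
    {b ∈ f '' s | P b}.Finite :=
  (hQ.image f).subset <| by
    rintro _ ⟨⟨a, ha, rfl⟩, hPa⟩
    exact ⟨a, ⟨ha, h a ha hPa⟩, rfl⟩

theorem PointFinite.insert_empty {X : Type*} {𝒰 : Set (Set X)} (h : PointFinite 𝒰) :
    PointFinite (insert ∅ 𝒰) := fun x =>
  (h x).subset <| by
    rintro U ⟨rfl | hU, hx⟩
    exacts [absurd hx (notMem_empty x), ⟨hU, hx⟩]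

section MetricSpace

variable {X : Type*} [MetricSpace X] {r s : ℝ} {𝒰 𝒲 : Set (Set X)}

theorem LebesgueAtLeast.isCover (h : LebesgueAtLeast s 𝒰) (hs : 0 < s) : IsCover 𝒰 :=
  fun x => let ⟨U, hU, hball⟩ := h x; ⟨U, hU, hball (mem_ball_self hs)⟩

theorem UnifBounded.image_of_subset {f : Set X → Set X} (h : UnifBounded 𝒰)
    (hf : ∀ U ∈ 𝒰, f U ⊆ U) : UnifBounded (f '' 𝒰) := by
  obtain ⟨M, hM, hbd⟩ := h
  refine ⟨M, hM, ?_⟩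
  rintro _ ⟨U, hU, rfl⟩
  exact (ediam_mono (hf U hU)).trans (hbd U hU)

theorem UnifBounded.insert_empty (h : UnifBounded 𝒰) : UnifBounded (insert ∅ 𝒰) := by
  obtain ⟨M, hM, hbd⟩ := h
  refine ⟨M, hM, ?_⟩
  rintro U (rfl | hU)
  · exact ediam_empty.le.trans zero_le
  · exact hbd U hU

theorem isCover_range_ball (hr : 0 < r) : IsCover (range fun x : X => ball x r) :=
  fun x => ⟨_, mem_range_self x, mem_ball_self hr⟩

theorem unifBounded_range_ball (hr : 0 < r) : UnifBounded (range fun x : X => ball x r) := by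
  refine ⟨2 * r, by positivity, ?_⟩
  rintro _ ⟨x, rfl⟩
  dsimp only
  rw [← eball_ofReal, ENNReal.ofReal_mul zero_le_two, ENNReal.ofReal_ofNat]
  exact ediam_eball_le

theorem UnifBounded.image_thickening (h : UnifBounded 𝒰) (hs : 0 ≤ s) :
    UnifBounded (thickening s '' 𝒰) := by
  obtain ⟨M, hM, hbd⟩ := h
  refine ⟨M + 2 * s, by positivity, ?_⟩
  rintro _ ⟨U, hU, rfl⟩
  calc ediam (thickening s U)
      = ediam (thickening (s.toNNReal : ℝ) U) := by rw [Real.coe_toNNReal s hs]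
    _ ≤ ediam U + 2 * ENNReal.ofReal s := ediam_thickening_le _
    _ ≤ ENNReal.ofReal M + 2 * ENNReal.ofReal s := by gcongr; exact hbd U hU
    _ = ENNReal.ofReal (M + 2 * s) := by
      rw [ENNReal.ofReal_add hM.le (by positivity), ENNReal.ofReal_mul zero_le_two,
        ENNReal.ofReal_ofNat]

theorem IsCover.lebesgueAtLeast_image_thickening (h : IsCover 𝒰) (s : ℝ) :
    LebesgueAtLeast s (thickening s '' 𝒰) := fun x =>
  let ⟨_, hU, hx⟩ := h x
  ⟨_, mem_image_of_mem _ hU, fun _ hy => mem_thickening_iff.2 ⟨x, hx, hy⟩⟩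

theorem finite_image_thickening_ball_subset {x : X} (hr : 0 < r)
    (hfin : {U ∈ 𝒰 | (ball x s ∩ U).Nonempty}.Finite) :
    {V ∈ thickening s '' 𝒰 | ball x r ⊆ V}.Finite :=
  hfin.sep_image_of_imp fun _ _ hsub =>
    let ⟨z, hz, hxz⟩ := mem_thickening_iff.1 (hsub (mem_ball_self hr))
    ⟨z, mem_ball'.2 hxz, hz⟩

def ballCore (r : ℝ) (W : Set X) : Set X := {y | ball y r ⊆ W}

theorem ballCore_subset (hr : 0 < r) (W : Set X) : ballCore r W ⊆ W :=
  fun _ hy => hy (mem_ball_self hr)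

theorem LebesgueAtLeast.isCover_image_ballCore (h : LebesgueAtLeast r 𝒲) :
    IsCover (ballCore r '' 𝒲) := fun x =>
  let ⟨_, hW, hx⟩ := h x
  ⟨_, mem_image_of_mem _ hW, hx⟩

theorem pointFinite_image_ballCore (h : ∀ x, {W ∈ 𝒲 | ball x r ⊆ W}.Finite) :
    PointFinite (ballCore r '' 𝒲) :=
  fun x => (h x).sep_image_of_imp fun _ _ hx => hx

theorem PointFinite.finite_image_ballCore_meeting_ball (h : PointFinite 𝒲) (x : X) :
    {V ∈ ballCore r '' 𝒲 | (ball x r ∩ V).Nonempty}.Finite :=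
  (h x).sep_image_of_imp fun _ _ ⟨_, hy, hyV⟩ => hyV (mem_ball_comm.1 hy)

theorem LebesgueAtLeast.exists_subset_ballCore {M : ℝ} {U : Set X}
    (h : LebesgueAtLeast (M + r) 𝒲) (hM : 0 ≤ M) (hU : ediam U ≤ ENNReal.ofReal M)
    (hne : U.Nonempty) : ∃ W ∈ 𝒲, U ⊆ ballCore r W := by
  obtain ⟨x₀, hx₀⟩ := hne
  obtain ⟨W, hW, hsub⟩ := h x₀
  refine ⟨W, hW, fun y hy z hz => hsub ?_⟩
  have hyx₀ : dist y x₀ ≤ M :=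
    (edist_le_ofReal hM).1 (edist_le_of_ediam_le hy hx₀ hU)
  rw [mem_ball] at hz ⊢
  linarith [dist_triangle z y x₀]

theorem lsWeaklyParacompact_of_forall_finite_meeting_ball
    (h : ∀ r > (0:ℝ), ∃ 𝒰 : Set (Set X), IsCover 𝒰 ∧ UnifBounded 𝒰 ∧
      ∀ x : X, {U ∈ 𝒰 | (ball x r ∩ U).Nonempty}.Finite) :
    LSWeaklyParacompact X := by
  intro r hr s hs
  obtain ⟨𝒰, hcov, hbd, hfin⟩ := h s hs
  have hLeb := hcov.lebesgueAtLeast_image_thickening s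
  exact ⟨_, hLeb.isCover hs, hbd.image_thickening hs.le, hLeb,
    fun x => finite_image_thickening_ball_subset hr (hfin x)⟩

theorem LSWeaklyParacompact.exists_pointFinite_coarsening (h : LSWeaklyParacompact X)
    (hbd : UnifBounded 𝒰) :
    ∃ 𝒱 : Set (Set X), IsCover 𝒱 ∧ UnifBounded 𝒱 ∧ PointFinite 𝒱 ∧
      ∀ U ∈ 𝒰, ∃ V ∈ 𝒱, U ⊆ V := by
  obtain ⟨M, hM, hUbd⟩ := hbd
  obtain ⟨𝒲, -, h𝒲bd, hLeb, hfin⟩ := h 1 one_pos (M + 1) (by positivity)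
  refine ⟨insert ∅ (ballCore 1 '' 𝒲), fun x => ?_,
    (h𝒲bd.image_of_subset fun W _ => ballCore_subset one_pos W).insert_empty,
    (pointFinite_image_ballCore hfin).insert_empty, fun U hU => ?_⟩
  · obtain ⟨W, hW, hx⟩ := hLeb.exists_subset_ballCore hM.le
      (ediam_singleton.le.trans zero_le) (singleton_nonempty x)
    exact ⟨_, mem_insert_of_mem _ (mem_image_of_mem _ hW), singleton_subset_iff.1 hx⟩
  · rcases U.eq_empty_or_nonempty with rfl | hne
    · exact ⟨∅, mem_insert _ _, subset_rfl⟩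
    obtain ⟨W, hW, hsub⟩ := hLeb.exists_subset_ballCore hM.le (hUbd U hU) hne
    exact ⟨_, mem_insert_of_mem _ (mem_image_of_mem _ hW), hsub⟩

theorem exists_finite_meeting_ball_of_forall_pointFinite_coarsening
    (h : ∀ 𝒰 : Set (Set X), IsCover 𝒰 → UnifBounded 𝒰 →
      ∃ 𝒱 : Set (Set X), IsCover 𝒱 ∧ UnifBounded 𝒱 ∧ PointFinite 𝒱 ∧
        ∀ U ∈ 𝒰, ∃ V ∈ 𝒱, U ⊆ V)
    (hr : 0 < r) :
    ∃ 𝒰 : Set (Set X), IsCover 𝒰 ∧ UnifBounded 𝒰 ∧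
      ∀ x : X, {U ∈ 𝒰 | (ball x r ∩ U).Nonempty}.Finite := by
  obtain ⟨𝒱, -, hbd, hpf, hcoarse⟩ := h _ (isCover_range_ball hr) (unifBounded_range_ball hr)
  have hLeb : LebesgueAtLeast r 𝒱 := fun x => hcoarse _ (mem_range_self x)
  exact ⟨_, hLeb.isCover_image_ballCore, hbd.image_of_subset fun V _ => ballCore_subset hr V,
    hpf.finite_image_ballCore_meeting_ball⟩

end MetricSpace

/-- Proposition 3.2. For a metric space `X` the following are equivalent:
(a) for each `r > 0` there is a uniformly bounded cover such that every `r`-ball intersects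
only finitely many of its members; (b) `X` is large scale weakly paracompact;
(c) every uniformly bounded cover refines a uniformly bounded point-finite cover. -/
theorem stmt1 {X : Type*} [MetricSpace X] :
    List.TFAE
      [∀ r > (0:ℝ), ∃ 𝒰 : Set (Set X), IsCover 𝒰 ∧ UnifBounded 𝒰 ∧
          ∀ x : X, {U ∈ 𝒰 | (Metric.ball x r ∩ U).Nonempty}.Finite,
        LSWeaklyParacompact X,
        ∀ 𝒰 : Set (Set X), IsCover 𝒰 → UnifBounded 𝒰 →
          ∃ 𝒱 : Set (Set X), IsCover 𝒱 ∧ UnifBounded 𝒱 ∧ PointFinite 𝒱 ∧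
            ∀ U ∈ 𝒰, ∃ V ∈ 𝒱, U ⊆ V] := by
  tfae_have 1 → 2 := lsWeaklyParacompact_of_forall_finite_meeting_ball
  tfae_have 2 → 3 := fun h _ _ hbd => h.exists_pointFinite_coarsening hbd
  tfae_have 3 → 1 := fun h _ hr =>
    exists_finite_meeting_ball_of_forall_pointFinite_coarsening h hr
  tfae_finish
end

section
/- If a metric space X has the property that for every r > 0 there is a uniformly bounded cover 𝒰 of X that can be written as a countable union 𝒰 = ⋃_{i=1}^∞ 𝒰_i of r-disjoint families 𝒰_i, then X is large scale weakly paracompact. -/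
/-- A family of subsets is `R`-disjoint if distinct members are at distance `> R`. -/
def RDisjointFam {X : Type*} [MetricSpace X] (R : ℝ) (𝒲 : Set (Set X)) : Prop :=
  ∀ U ∈ 𝒲, ∀ V ∈ 𝒲, U ≠ V → ∀ x ∈ U, ∀ y ∈ V, R < dist x y

open Metric

section
variable {X : Type*} [MetricSpace X]

theorem IsCover.of_lebesgueAtLeast {s : ℝ} {𝒰 : Set (Set X)} (hs : 0 < s)
    (h : LebesgueAtLeast s 𝒰) : IsCover 𝒰 := fun x ↦
  let ⟨U, hU, hball⟩ := h x
  ⟨U, hU, hball (mem_ball_self hs)⟩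

theorem RDisjointFam.eq_of_mem_thickening {δ : ℝ} {𝒲 : Set (Set X)}
    (h : RDisjointFam (2 * δ) 𝒲) {U V : Set X} (hU : U ∈ 𝒲) (hV : V ∈ 𝒲) {x : X}
    (hxU : x ∈ thickening δ U) (hxV : x ∈ thickening δ V) : U = V := by
  by_contra hne
  obtain ⟨u, hu, hxu⟩ := mem_thickening_iff.1 hxU
  obtain ⟨v, hv, hxv⟩ := mem_thickening_iff.1 hxV
  linarith [h U hU V hV hne u hu v hv, dist_triangle_left u v x]

def trimmedThickening (𝒰 : ℕ → Set (Set X)) (δ : ℝ) (i : ℕ) (U : Set X) : Set X :=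
  thickening δ U \ ⋃ j < i, ⋃₀ 𝒰 j

def trimmedCover (𝒰 : ℕ → Set (Set X)) (δ : ℝ) : Set (Set X) :=
  ⋃ i, trimmedThickening 𝒰 δ i '' 𝒰 i

variable {𝒰 : ℕ → Set (Set X)}

theorem unifBounded_trimmedCover {δ : ℝ} (hδ : 0 ≤ δ) (h𝒰 : UnifBounded (⋃ i, 𝒰 i)) :
    UnifBounded (trimmedCover 𝒰 δ) := by
  obtain ⟨M, hM, hbd⟩ := h𝒰
  refine ⟨M + 2 * δ, by positivity, ?_⟩
  simp only [trimmedCover, Set.mem_iUnion, Set.mem_image]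
  rintro _ ⟨i, U, hU, rfl⟩
  calc ediam (trimmedThickening 𝒰 δ i U)
      ≤ ediam (thickening (δ.toNNReal : ℝ) U) := by
        rw [Real.coe_toNNReal _ hδ]
        exact ediam_mono Set.sdiff_subset
    _ ≤ ediam U + 2 * ENNReal.ofReal δ := ediam_thickening_le _
    _ ≤ ENNReal.ofReal M + 2 * ENNReal.ofReal δ := by
        gcongr
        exact hbd U (Set.mem_iUnion.2 ⟨i, hU⟩)
    _ = ENNReal.ofReal (M + 2 * δ) := by
        rw [ENNReal.ofReal_add hM.le (by positivity), ENNReal.ofReal_mul zero_le_two,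
          ENNReal.ofReal_ofNat]

theorem lebesgueAtLeast_trimmedCover {s : ℝ} (hs : 0 < s) (h𝒰 : IsCover (⋃ i, 𝒰 i)) :
    LebesgueAtLeast s (trimmedCover 𝒰 (2 * s)) := by
  classical
  intro x
  have hex : ∃ i, ∃ U ∈ 𝒰 i, x ∈ thickening s U := by
    obtain ⟨U, hU, hxU⟩ := h𝒰 x
    obtain ⟨i, hUi⟩ := Set.mem_iUnion.1 hU
    exact ⟨i, U, hUi, self_subset_thickening hs U hxU⟩
  obtain ⟨U, hU, hxU⟩ := Nat.find_spec hex
  refine ⟨_, Set.mem_iUnion.2 ⟨_, Set.mem_image_of_mem _ hU⟩, fun y hy ↦ ⟨?_, ?_⟩⟩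
  · rw [two_mul]
    exact thickening_thickening_subset s s U (ball_subset_thickening hxU s hy)
  · simp only [Set.mem_iUnion, Set.mem_sUnion]
    rintro ⟨j, hj, V, hV, hyV⟩
    exact Nat.find_min hex hj
      ⟨V, hV, mem_thickening_iff.2 ⟨y, hyV, mem_ball'.1 hy⟩⟩

theorem le_of_mem_trimmedThickening {δ : ℝ} {i i₀ : ℕ} {U U₀ : Set X} {x : X}
    (hU₀ : U₀ ∈ 𝒰 i₀) (hxU₀ : x ∈ U₀) (hx : x ∈ trimmedThickening 𝒰 δ i U) : i ≤ i₀ := by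
  by_contra! hlt
  exact hx.2 (Set.mem_biUnion hlt ⟨U₀, hU₀, hxU₀⟩)

theorem finite_setOf_mem_trimmedCover {δ : ℝ} (h𝒰 : IsCover (⋃ i, 𝒰 i))
    (hdisj : ∀ i, RDisjointFam (2 * δ) (𝒰 i)) (x : X) :
    {W ∈ trimmedCover 𝒰 δ | x ∈ W}.Finite := by
  obtain ⟨U₀, hU₀, hxU₀⟩ := h𝒰 x
  obtain ⟨i₀, hU₀i⟩ := Set.mem_iUnion.1 hU₀
  have hsub : {W ∈ trimmedCover 𝒰 δ | x ∈ W} ⊆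
      ⋃ i ∈ Set.Iic i₀, {W ∈ trimmedThickening 𝒰 δ i '' 𝒰 i | x ∈ W} := by
    rintro W ⟨hW, hxW⟩
    obtain ⟨i, U, hU, rfl⟩ := Set.mem_iUnion.1 hW
    exact Set.mem_biUnion (le_of_mem_trimmedThickening hU₀i hxU₀ hxW)
      ⟨Set.mem_image_of_mem _ hU, hxW⟩
  refine ((Set.finite_Iic i₀).biUnion fun i _ ↦ Set.Subsingleton.finite ?_).subset hsub
  rintro _ ⟨⟨U₁, hU₁, rfl⟩, hx₁⟩ _ ⟨⟨U₂, hU₂, rfl⟩, hx₂⟩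
  rw [(hdisj i).eq_of_mem_thickening hU₁ hU₂ hx₁.1 hx₂.1]

end

/-- Proposition 3.3. If for every `r > 0` there is a uniformly bounded
cover of `X` that is a countable union of `r`-disjoint families, then `X` is large scale
weakly paracompact. -/
theorem stmt2 {X : Type*} [MetricSpace X]
    (h : ∀ r > (0:ℝ), ∃ 𝒰 : ℕ → Set (Set X), IsCover (⋃ i, 𝒰 i) ∧
      UnifBounded (⋃ i, 𝒰 i) ∧ ∀ i, RDisjointFam r (𝒰 i)) :
    LSWeaklyParacompact X := by
  intro r hr s hs
  obtain ⟨𝒰, hcov, hbd, hdisj⟩ := h (2 * (2 * s)) (by positivity)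
  have hleb := lebesgueAtLeast_trimmedCover hs hcov
  refine ⟨trimmedCover 𝒰 (2 * s), .of_lebesgueAtLeast hs hleb,
    unifBounded_trimmedCover (by positivity) hbd, hleb, fun x ↦ ?_⟩
  exact (finite_setOf_mem_trimmedCover hcov hdisj x).subset
    fun W hW ↦ ⟨hW.1, hW.2 (mem_ball_self hr)⟩
end

section
/- If a metric space X is separable at some scale r > 0, i.e., there is a countable subset S of X with ⋃_{x∈S} B(x,r) = X, then X is large scale weakly paracompact. -/
lemma ediam_metric_ball {X : Type*} [MetricSpace X] (x : X) (ε : ℝ) :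
    EMetric.diam (Metric.ball x ε) ≤ ENNReal.ofReal (2 * ε) := by
  rw [← Metric.emetric_ball]
  calc EMetric.diam (EMetric.ball x (ENNReal.ofReal ε)) ≤ 2 * ENNReal.ofReal ε :=
        EMetric.diam_ball
    _ = ENNReal.ofReal (2 * ε) := by
        rw [ENNReal.ofReal_mul (by norm_num)]
        norm_num

/-- Corollary 3.4. If `X` is separable at some scale `r > 0`
(there is a countable `S ⊆ X` whose `r`-balls cover `X`), then `X` is large scale
weakly paracompact. -/
theorem stmt4 {X : Type*} [MetricSpace X] (r : ℝ) (hr : 0 < r) (S : Set X)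
    (hS : S.Countable) (hcov : ⋃ x ∈ S, Metric.ball x r = Set.univ) :
    LSWeaklyParacompact X := by
  intro r' _hr' s hs
  rcases isEmpty_or_nonempty X with hX | hX
  · refine ⟨∅, ?_, ⟨1, one_pos, ?_⟩, ?_, ?_⟩
    · intro x; exact (hX.false x).elim
    · intro U hU; exact absurd hU (Set.notMem_empty U)
    · intro x; exact (hX.false x).elim
    · intro x
      exact Set.Finite.subset (Set.finite_empty) (fun U hU => hU.1)
  · -- S is nonempty
    have hSne : S.Nonempty := by
      obtain ⟨x⟩ := hX
      have : x ∈ ⋃ y ∈ S, Metric.ball y r := hcov ▸ Set.mem_univ x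
      rcases Set.mem_iUnion₂.mp this with ⟨y, hy, _⟩
      exact ⟨y, hy⟩
    obtain ⟨c, hc⟩ := Set.Countable.exists_eq_range hS hSne
    -- every point is within r of some c n
    have hcc : ∀ x : X, ∃ n : ℕ, dist x (c n) < r := by
      intro x
      have : x ∈ ⋃ y ∈ S, Metric.ball y r := hcov ▸ Set.mem_univ x
      rcases Set.mem_iUnion₂.mp this with ⟨y, hy, hxy⟩
      rw [hc] at hy
      rcases hy with ⟨n, rfl⟩
      exact ⟨n, hxy⟩
    set V : ℕ → Set X :=
      fun n => Metric.ball (c n) (r + 2 * s) \ ⋃ m ∈ Set.Iio n, Metric.ball (c m) r with hV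
    have hleb : ∀ x : X, ∃ n, Metric.ball x s ⊆ V n := by
      intro x
      have hex : ∃ n, dist x (c n) < r + s := by
        obtain ⟨n, hn⟩ := hcc x
        exact ⟨n, lt_of_lt_of_le hn (by linarith)⟩
      classical
      let n := Nat.find hex
      refine ⟨n, fun y hy => ?_⟩
      have hxn : dist x (c n) < r + s := Nat.find_spec hex
      have hy' : dist y x < s := hy
      constructor
      · have : dist y (c n) ≤ dist y x + dist x (c n) := dist_triangle _ _ _
        have : dist y (c n) < r + 2 * s := by linarith
        exact this
      · intro hmem
        rcases Set.mem_iUnion₂.mp hmem with ⟨m, hm, hym⟩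
        have hym' : dist y (c m) < r := hym
        have : dist x (c m) ≤ dist x y + dist y (c m) := dist_triangle _ _ _
        have hxm : dist x (c m) < r + s := by
          rw [dist_comm] at hy'; linarith
        exact absurd hxm (Nat.find_min hex hm)
    refine ⟨Set.range V, ?_, ⟨2 * (r + 2 * s), by linarith, ?_⟩, ?_, ?_⟩
    · intro x
      obtain ⟨n, hn⟩ := hleb x
      exact ⟨V n, Set.mem_range_self n, hn (Metric.mem_ball_self hs)⟩
    · rintro U ⟨n, rfl⟩
      exact le_trans (EMetric.diam_mono Set.diff_subset) (ediam_metric_ball _ _)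
    · intro x
      obtain ⟨n, hn⟩ := hleb x
      exact ⟨V n, Set.mem_range_self n, hn⟩
    · intro x
      obtain ⟨n₀, hn₀⟩ := hcc x
      have hsub : {U ∈ Set.range V | Metric.ball x r' ⊆ U} ⊆ V '' Set.Iic n₀ := by
        rintro U ⟨⟨n, rfl⟩, hball⟩
        refine ⟨n, ?_, rfl⟩
        by_contra hgt
        simp only [Set.mem_Iic, not_le] at hgt
        have hx : x ∈ V n := hball (Metric.mem_ball_self _hr')
        exact hx.2 (Set.mem_iUnion₂.mpr ⟨n₀, hgt, hn₀⟩)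
      exact Set.Finite.subset ((Set.finite_Iic n₀).image V) hsub
end

section
/- Let X be a metric space, A ⊂ X, S a set, and δ, r, ε > 0. Suppose: f : A → Δ(S) is a (δ,δ)-Lipschitz partition of unity; g : X → Δ(S) is a (δ,δ)-Lipschitz partition of unity; p : X → A is a retraction such that d(x, p(x)) < dist(x, A) + 1 for all x ∈ X; α : X → [0,1] is (1/r)-Lipschitz with α(A) ⊂ {0} and α(X ∖ B(A,r)) ⊂ {1}, where B(A,r) = {x ∈ X : dist(x,A) < r}; and h : X → Δ(S) is defined by h(x) = α(x)·g(x) + (1 − α(x))·f(p(x)). If r ≥ 4/ε, δ ≤ ε/3 − 2/(3r), and δ ≤ ε/(4r+7), then h is an (ε,ε)-Lipschitz partition of unity extending f. -/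
/-!
Within distance `r` of `A`, write `h x - h y` as
`α x (g x - g y) + (1 - α x) (f (p x) - f (p y)) + (α x - α y) (g y - f (p y))`.
The first two terms are controlled by the Lipschitz bounds of `g` and `f`, the retraction moving
points near `A` by at most `r + 1`; the last has `l¹`-norm at most `2 |α x - α y|`, which is at
most `2` and at most `2 d(x, y) / r`; the first bound serves when `d(x, y) > r`, the second
otherwise. Far from `A` both points see `h = g`.
-/

/-- The `l¹` distance between two (finitely supported) functions `S → ℝ`,
modeling the metric of `Δ(S) ⊆ l¹(S)`. -/
noncomputable def l1dist {S : Type*} (φ ψ : S → ℝ) : ℝ := ∑ᶠ v, |φ v - ψ v|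

/-- `φ` is a point of `Δ(S)`. -/
def IsDelta {S : Type*} (φ : S → ℝ) : Prop :=
  (∀ v, 0 ≤ φ v) ∧ (Function.support φ).Finite ∧ ∑ᶠ v, φ v = 1

/-- `f` is `(ε,ε)`-Lipschitz on `A` (with respect to the `l¹` metric on `Δ(S)`). -/
def LipschitzEpsOn {X S : Type*} [MetricSpace X] (ε : ℝ) (f : X → S → ℝ) (A : Set X) : Prop :=
  ∀ x ∈ A, ∀ y ∈ A, l1dist (f x) (f y) ≤ ε * dist x y + ε

open Function Metric Set

section Delta

variable {S : Type*}

lemma l1dist_comm (φ ψ : S → ℝ) : l1dist φ ψ = l1dist ψ φ := by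
  simp only [l1dist, abs_sub_comm]

lemma IsDelta.hasFiniteSupport {φ : S → ℝ} (hφ : IsDelta φ) : φ.HasFiniteSupport := hφ.2.1

lemma IsDelta.convexComb {φ ψ : S → ℝ} (hφ : IsDelta φ) (hψ : IsDelta ψ) {t : ℝ}
    (ht : t ∈ Icc (0 : ℝ) 1) : IsDelta fun v => t * φ v + (1 - t) * ψ v := by
  obtain ⟨hφ₀, hφfin : φ.HasFiniteSupport, hφ₁⟩ := hφ
  obtain ⟨hψ₀, hψfin : ψ.HasFiniteSupport, hψ₁⟩ := hψ
  refine ⟨fun v => ?_, show HasFiniteSupport _ by fun_prop, ?_⟩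
  · exact add_nonneg (mul_nonneg ht.1 (hφ₀ v)) (mul_nonneg (sub_nonneg.2 ht.2) (hψ₀ v))
  · rw [finsum_add_distrib (by fun_prop) (by fun_prop), ← mul_finsum, ← mul_finsum, hφ₁, hψ₁]
    ring

lemma IsDelta.l1dist_le_two {φ ψ : S → ℝ} (hφ : IsDelta φ) (hψ : IsDelta ψ) :
    l1dist φ ψ ≤ 2 := by
  have hφfin := hφ.hasFiniteSupport
  have hψfin := hψ.hasFiniteSupport
  calc l1dist φ ψ ≤ ∑ᶠ v, (φ v + ψ v) :=
        finsum_le_finsum' (by fun_prop (disch := simp)) (by fun_prop) fun v =>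
          abs_sub_le_iff.2 ⟨by linarith [hψ.1 v], by linarith [hφ.1 v]⟩
    _ = 2 := by rw [finsum_add_distrib hφfin hψfin, hφ.2.2, hψ.2.2]; norm_num

lemma abs_convexComb_sub_convexComb_le {s t a b a' b' : ℝ} (hs : s ∈ Icc (0 : ℝ) 1) :
    |(s * a + (1 - s) * b) - (t * a' + (1 - t) * b')| ≤
      s * |a - a'| + (1 - s) * |b - b'| + |s - t| * |a' - b'| := by
  calc _ = |s * (a - a') + (1 - s) * (b - b') + (s - t) * (a' - b')| := by ring_nf
    _ ≤ |s * (a - a')| + |(1 - s) * (b - b')| + |(s - t) * (a' - b')| := abs_add_three _ _ _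
    _ = _ := by
      rw [abs_mul, abs_mul, abs_mul, abs_of_nonneg hs.1, abs_of_nonneg (sub_nonneg.2 hs.2)]

lemma l1dist_convexComb_le {φ ψ φ' ψ' : S → ℝ} (hφ : φ.HasFiniteSupport)
    (hψ : ψ.HasFiniteSupport) (hφ' : φ'.HasFiniteSupport) (hψ' : ψ'.HasFiniteSupport)
    {s t : ℝ} (hs : s ∈ Icc (0 : ℝ) 1) :
    l1dist (fun v => s * φ v + (1 - s) * ψ v) (fun v => t * φ' v + (1 - t) * ψ' v) ≤
      s * l1dist φ φ' + (1 - s) * l1dist ψ ψ' + |s - t| * l1dist φ' ψ' := by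
  simp only [l1dist]
  rw [mul_finsum, mul_finsum, mul_finsum, ← finsum_add_distrib (by fun_prop (disch := simp))
    (by fun_prop (disch := simp)), ← finsum_add_distrib (by fun_prop (disch := simp))
    (by fun_prop (disch := simp))]
  exact finsum_le_finsum' (by fun_prop (disch := simp)) (by fun_prop (disch := simp))
    fun v => abs_convexComb_sub_convexComb_le hs

end Delta

lemma dist_le_of_dist_lt_infDist_add_one {X : Type*} [PseudoMetricSpace X] {A : Set X}
    {p : X → X} (hp : ∀ x, dist x (p x) < infDist x A + 1) (x y : X) :
    dist (p x) (p y) ≤ 2 * infDist x A + 2 * dist x y + 2 := by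
  have hy : infDist y A ≤ infDist x A + dist x y := by
    rw [dist_comm]
    exact infDist_le_infDist_add_dist
  have := dist_triangle4 (p x) x y (p y)
  rw [dist_comm (p x) x] at this
  linarith [hp x, hp y]

lemma lipschitz_budget_le {δ r ε d t : ℝ} (hδ : 0 ≤ δ) (hr : 0 < r) (hε : 0 < ε) (hd : 0 ≤ d)
    (ht₁ : t ≤ 1) (htr : t * r ≤ d) (hr4 : 4 / ε ≤ r)
    (hδ1 : δ ≤ ε / 3 - 2 / (3 * r)) (hδ2 : δ ≤ ε / (4 * r + 7)) :
    δ * (2 * d + 2 * r + 3) + 2 * t ≤ ε * d + ε := by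
  have hεr : 4 ≤ ε * r := by rw [div_le_iff₀ hε] at hr4; linarith
  have hδr : 3 * δ * r + 2 ≤ ε * r := by
    have := mul_le_mul_of_nonneg_left hδ1 (by positivity : (0 : ℝ) ≤ 3 * r)
    rw [mul_sub, mul_div_cancel₀ _ (by positivity : (3 * r : ℝ) ≠ 0)] at this
    linarith
  have hδε : δ * (4 * r + 7) ≤ ε := (le_div_iff₀ (by positivity)).1 hδ2
  rcases le_total d r with hdr | hrd
  · nlinarith [mul_le_mul_of_nonneg_left htr hε.le]
  · have : 0 ≤ r * (ε * d - 3 * δ * d - 2) := by nlinarith [mul_le_mul_of_nonneg_right hδr hd]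
    nlinarith [(mul_nonneg_iff_of_pos_left hr).1 this]

lemma l1dist_convexComb_retraction_le {X S : Type*} [MetricSpace X] {A : Set X} {δ r : ℝ}
    {f g : X → S → ℝ} {p : X → X} {α : X → ℝ} (hδ : 0 ≤ δ)
    (hfA : ∀ a ∈ A, IsDelta (f a)) (hflip : LipschitzEpsOn δ f A)
    (hgX : ∀ x, IsDelta (g x)) (hglip : LipschitzEpsOn δ g univ)
    (hpA : ∀ x, p x ∈ A) (hpdist : ∀ x, dist x (p x) < infDist x A + 1)
    {x : X} (hαx : α x ∈ Icc (0 : ℝ) 1) (hx : infDist x A < r) (y : X) :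
    l1dist (fun v => α x * g x v + (1 - α x) * f (p x) v)
        (fun v => α y * g y v + (1 - α y) * f (p y) v) ≤
      δ * (2 * dist x y + 2 * r + 3) + 2 * |α x - α y| := by
  set M := δ * (2 * dist x y + 2 * r + 3)
  have hinf : 0 ≤ infDist x A := infDist_nonneg
  have hg : l1dist (g x) (g y) ≤ M := by
    nlinarith [hglip x trivial y trivial, dist_nonneg (x := x) (y := y)]
  have hf : l1dist (f (p x)) (f (p y)) ≤ M := by
    nlinarith [hflip _ (hpA x) _ (hpA y),
      mul_le_mul_of_nonneg_left (dist_le_of_dist_lt_infDist_add_one hpdist x y) hδ]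
  have hαx' : 0 ≤ 1 - α x := sub_nonneg.2 hαx.2
  calc _ ≤ α x * l1dist (g x) (g y) + (1 - α x) * l1dist (f (p x)) (f (p y)) +
          |α x - α y| * l1dist (g y) (f (p y)) :=
        l1dist_convexComb_le (hgX x).hasFiniteSupport (hfA _ (hpA x)).hasFiniteSupport
          (hgX y).hasFiniteSupport (hfA _ (hpA y)).hasFiniteSupport hαx
    _ ≤ α x * M + (1 - α x) * M + |α x - α y| * 2 := by
        gcongr
        · exact hαx.1
        · exact (hgX y).l1dist_le_two (hfA _ (hpA y))
    _ = M + 2 * |α x - α y| := by ring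

/-- Lemma 4.1, Lipschitz part. Given a `(δ,δ)`-Lipschitz partition of
unity `f` on `A ⊆ X`, a `(δ,δ)`-Lipschitz partition of unity `g` on `X`, a retraction
`p : X → A` with `d(x,p(x)) < dist(x,A) + 1`, a `(1/r)`-Lipschitz `α : X → [0,1]` vanishing
on `A` and equal to `1` off `B(A,r)`, and `h(x) = α(x)·g(x) + (1-α(x))·f(p(x))`: if
`r ≥ 4/ε`, `δ ≤ ε/3 - 2/(3r)` and `δ ≤ ε/(4r+7)`, then `h` is an `(ε,ε)`-Lipschitz
partition of unity extending `f`. -/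
theorem stmt5 {X S : Type*} [MetricSpace X] (A : Set X) (δ r ε : ℝ)
    (hδ : 0 < δ) (hr : 0 < r) (hε : 0 < ε)
    (f g : X → S → ℝ) (p : X → X) (α : X → ℝ)
    (hfA : ∀ a ∈ A, IsDelta (f a)) (hflip : LipschitzEpsOn δ f A)
    (hgX : ∀ x : X, IsDelta (g x)) (hglip : LipschitzEpsOn δ g Set.univ)
    (hpA : ∀ x : X, p x ∈ A) (hpretr : ∀ a ∈ A, p a = a)
    (hpdist : ∀ x : X, dist x (p x) < Metric.infDist x A + 1)
    (hα01 : ∀ x : X, α x ∈ Set.Icc (0:ℝ) 1)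
    (hαlip : ∀ x y : X, |α x - α y| ≤ (1 / r) * dist x y)
    (hαA : ∀ a ∈ A, α a = 0)
    (hαout : ∀ x : X, x ∉ Metric.thickening r A → α x = 1)
    (h : X → S → ℝ)
    (hdef : ∀ x v, h x v = α x * g x v + (1 - α x) * f (p x) v)
    (hr4 : 4 / ε ≤ r) (hδ1 : δ ≤ ε / 3 - 2 / (3 * r)) (hδ2 : δ ≤ ε / (4 * r + 7)) :
    (∀ a ∈ A, h a = f a) ∧ (∀ x : X, IsDelta (h x)) ∧ LipschitzEpsOn ε h Set.univ := by
  have hh : ∀ x, h x = fun v => α x * g x v + (1 - α x) * f (p x) v := fun x => funext (hdef x)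
  have near : ∀ x y, x ∈ thickening r A → l1dist (h x) (h y) ≤ ε * dist x y + ε := by
    intro x y hx
    rw [mem_thickening_iff_infDist_lt ⟨p x, hpA x⟩] at hx
    rw [hh x, hh y]
    have htr : |α x - α y| * r ≤ dist x y := by
      rw [← le_div_iff₀ hr, div_eq_inv_mul, ← one_div]
      exact hαlip x y
    have ht₁ : |α x - α y| ≤ 1 := by
      simpa using abs_sub_le_of_le_of_le (hα01 x).1 (hα01 x).2 (hα01 y).1 (hα01 y).2
    refine (l1dist_convexComb_retraction_le hδ.le hfA hflip hgX hglip hpA hpdist (hα01 x) hx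
      y).trans ?_
    exact lipschitz_budget_le hδ.le hr hε dist_nonneg ht₁ htr hr4 hδ1 hδ2
  refine ⟨fun a ha => ?_, fun x => hh x ▸ (hgX x).convexComb (hfA _ (hpA x)) (hα01 x), ?_⟩
  · simp [hh, hαA a ha, hpretr a ha]
  intro x _ y _
  by_cases hx : x ∈ thickening r A
  · exact near x y hx
  by_cases hy : y ∈ thickening r A
  · rw [l1dist_comm, dist_comm]
    exact near y x hy
  have hδε : δ ≤ ε := hδ2.trans (div_le_self hε.le (by linarith))
  simp only [hh, hαout x hx, hαout y hy, one_mul, sub_self, zero_mul, add_zero]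
  linarith [hglip x trivial y trivial,
    mul_le_mul_of_nonneg_right hδε (dist_nonneg (x := x) (y := y))]
end

section
/- Let X be a metric space, A ⊂ X, S a set, and δ, r, M > 0. Suppose: f : A → Δ(S) and g : X → Δ(S) are (δ,δ)-Lipschitz partitions of unity that are both M-cobounded; p : X → A is a retraction such that d(x, p(x)) < dist(x, A) + 1 for all x ∈ X; α : X → [0,1] is (1/r)-Lipschitz with α(A) ⊂ {0} and α(X ∖ B(A,r)) ⊂ {1}, where B(A,r) = {x ∈ X : dist(x,A) < r}; h : X → Δ(S) is defined by h(x) = α(x)·g(x) + (1 − α(x))·f(p(x)); and the carriers of f(A) and g(X) are disjoint, i.e., no vertex v ∈ S satisfies both f(a)(v) > 0 for some a ∈ A and g(x)(v) > 0 for some x ∈ X. Then h is (M + 2r + 2)-cobounded. -/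
/-- `f` is `K`-cobounded on `A`: for every vertex `v`, the preimage of the star of `v`
has diameter at most `K`. -/
def CoboundedOn {X S : Type*} [MetricSpace X] (K : ℝ) (f : X → S → ℝ) (A : Set X) : Prop :=
  ∀ v : S, EMetric.diam {x ∈ A | 0 < f x v} ≤ ENNReal.ofReal K

/-- Lemma 4.1, cobounded part. With `f`, `g`, `p`, `α`, `h` as in
Lemma 4.1, if additionally `f` and `g` are both `M`-cobounded and the carriers of `f(A)`
and `g(X)` are disjoint, then `h` is `(M + 2r + 2)`-cobounded. -/
theorem stmt6 {X S : Type*} [MetricSpace X] (A : Set X) (δ r M : ℝ)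
    (hδ : 0 < δ) (hr : 0 < r) (hM : 0 < M)
    (f g : X → S → ℝ) (p : X → X) (α : X → ℝ)
    (hfA : ∀ a ∈ A, IsDelta (f a)) (hflip : LipschitzEpsOn δ f A)
    (hfcob : CoboundedOn M f A)
    (hgX : ∀ x : X, IsDelta (g x)) (hglip : LipschitzEpsOn δ g Set.univ)
    (hgcob : CoboundedOn M g Set.univ)
    (hpA : ∀ x : X, p x ∈ A) (hpretr : ∀ a ∈ A, p a = a)
    (hpdist : ∀ x : X, dist x (p x) < Metric.infDist x A + 1)
    (hα01 : ∀ x : X, α x ∈ Set.Icc (0:ℝ) 1)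
    (hαlip : ∀ x y : X, |α x - α y| ≤ (1 / r) * dist x y)
    (hαA : ∀ a ∈ A, α a = 0)
    (hαout : ∀ x : X, x ∉ Metric.thickening r A → α x = 1)
    (h : X → S → ℝ)
    (hdef : ∀ x v, h x v = α x * g x v + (1 - α x) * f (p x) v)
    (hcarrier : ¬ ∃ v : S, (∃ a ∈ A, 0 < f a v) ∧ (∃ x : X, 0 < g x v)) :
    CoboundedOn (M + 2 * r + 2) h Set.univ := by
  push_neg at hcarrier
  intro v
  by_cases hg0 : ∀ x : X, g x v = 0
  · -- f-case: h x v = (1 - α x) * f (p x) v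
    apply EMetric.diam_le
    intro x hx y hy
    simp only [Set.mem_setOf_eq, Set.mem_univ, true_and] at hx hy
    have hfx : 0 < f (p x) v := by
      by_contra hc
      have h0 : f (p x) v = 0 := le_antisymm (not_lt.1 hc) ((hfA _ (hpA x)).1 v)
      rw [hdef, hg0, h0] at hx; simp at hx
    have hfy : 0 < f (p y) v := by
      by_contra hc
      have h0 : f (p y) v = 0 := le_antisymm (not_lt.1 hc) ((hfA _ (hpA y)).1 v)
      rw [hdef, hg0, h0] at hy; simp at hy
    have hαx : α x < 1 := by
      rcases lt_or_eq_of_le (hα01 x).2 with h1 | h1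
      · exact h1
      · rw [hdef, hg0, h1] at hx; simp at hx
    have hαy : α y < 1 := by
      rcases lt_or_eq_of_le (hα01 y).2 with h1 | h1
      · exact h1
      · rw [hdef, hg0, h1] at hy; simp at hy
    have hAne : A.Nonempty := ⟨p x, hpA x⟩
    have hdx : dist x (p x) < r + 1 := by
      have hin : x ∈ Metric.thickening r A := by
        by_contra hc; exact absurd (hαout x hc) (by linarith)
      rw [Metric.mem_thickening_iff_infDist_lt hAne] at hin
      have := hpdist x; linarith
    have hdy : dist y (p y) < r + 1 := by
      have hin : y ∈ Metric.thickening r A := by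
        by_contra hc; exact absurd (hαout y hc) (by linarith)
      rw [Metric.mem_thickening_iff_infDist_lt hAne] at hin
      have := hpdist y; linarith
    have hpxy : edist (p x) (p y) ≤ ENNReal.ofReal M := by
      refine le_trans (EMetric.edist_le_diam_of_mem ?_ ?_) (hfcob v)
      · exact ⟨hpA x, hfx⟩
      · exact ⟨hpA y, hfy⟩
    calc edist x y ≤ edist x (p x) + edist (p x) (p y) + edist (p y) y :=
          edist_triangle4 _ _ _ _
      _ ≤ ENNReal.ofReal (r + 1) + ENNReal.ofReal M + ENNReal.ofReal (r + 1) := by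
          gcongr
          · rw [edist_dist]; exact ENNReal.ofReal_le_ofReal hdx.le
          · rw [edist_dist, dist_comm]; exact ENNReal.ofReal_le_ofReal hdy.le
      _ = ENNReal.ofReal (M + 2 * r + 2) := by
          rw [← ENNReal.ofReal_add (by linarith) hM.le,
            ← ENNReal.ofReal_add (by positivity) (by linarith)]
          ring_nf
  · -- g-case: v is carried by g, so not by f on A
    push_neg at hg0
    obtain ⟨x₀, hx₀⟩ := hg0
    have hgx₀ : 0 < g x₀ v :=
      lt_of_le_of_ne ((hgX x₀).1 v) (Ne.symm hx₀)
    have hfz : ∀ a ∈ A, f a v = 0 := by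
      intro a ha
      by_contra hc
      exact (hcarrier v ⟨a, ha, lt_of_le_of_ne ((hfA a ha).1 v) (Ne.symm hc)⟩ x₀).not_gt hgx₀
    have hsub : {x ∈ (Set.univ : Set X) | 0 < h x v} ⊆ {x ∈ (Set.univ : Set X) | 0 < g x v} := by
      intro x hx
      simp only [Set.mem_setOf_eq, Set.mem_univ, true_and] at hx ⊢
      rw [hdef, hfz _ (hpA x)] at hx
      by_contra hc
      have h0 : g x v = 0 := le_antisymm (not_lt.1 hc) ((hgX x).1 v)
      rw [h0] at hx; simp at hx
    refine le_trans (le_trans (EMetric.diam_mono hsub) (hgcob v)) ?_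
    exact ENNReal.ofReal_le_ofReal (by linarith)
end

section
/- Let X be a metric space, n ∈ ℕ ∪ {∞}, and S a set of cardinality bigger than card(X × ℕ). If there exist functions α : (0,∞) → (0,∞) and M : (0,∞) × (0,∞) → (0,∞) such that LsExtDim(X, α, M) ≤ n, then for each ε > 0 there is an (ε,ε)-Lipschitz partition of unity f : X → Δ(S)^(n) such that the family {f⁻¹(st(v))}_{v∈S} is uniformly bounded. -/
universe u

/-- `φ` is a point of the `n`-skeleton `Δ(S)⁽ⁿ⁾` (with `Δ(S)⁽∞⁾ = Δ(S)`):
its support has cardinality at most `n + 1`. -/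
def IsDeltaSkel {S : Type*} (n : ℕ∞) (φ : S → ℝ) : Prop :=
  IsDelta φ ∧ (Function.support φ).encard ≤ n + 1

/-- `f` is a partition of unity on `A` with values in `Δ(S)⁽ⁿ⁾`. -/
def PartUnitySkelOn {X S : Type*} (n : ℕ∞) (f : X → S → ℝ) (A : Set X) : Prop :=
  ∀ a ∈ A, IsDeltaSkel n (f a)

/-- `LsExtDim(X, α, M) ≤ n` (Definition 6.2): for any set `S` of cardinality bigger than
`card(X × ℕ)`, any `K > 0`, any `δ ∈ Dα`, every `(α δ, α δ)`-Lipschitz `K`-cobounded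
partition of unity `f : A → Δ(S)⁽ⁿ⁾`, `A ⊆ X`, extends to a `(δ,δ)`-Lipschitz
`M δ K`-cobounded partition of unity `g : X → Δ(S)⁽ⁿ⁾`. -/
def LsExtDimLE (X : Type u) [MetricSpace X] (n : ℕ∞) (Dα : Set ℝ)
    (α : ℝ → ℝ) (M : ℝ → ℝ → ℝ) : Prop :=
  ∀ S : Type u, Cardinal.mk (X × ℕ) < Cardinal.mk S →
    ∀ K : ℝ, 0 < K → ∀ δ ∈ Dα, ∀ (A : Set X) (f : X → S → ℝ),
      PartUnitySkelOn n f A → LipschitzEpsOn (α δ) f A → CoboundedOn K f A →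
      ∃ g : X → S → ℝ, (∀ a ∈ A, g a = f a) ∧ PartUnitySkelOn n g Set.univ ∧
        LipschitzEpsOn δ g Set.univ ∧ CoboundedOn (M δ K) g Set.univ

section EmptyDomain

variable {X S : Type*}

theorem partUnitySkelOn_empty (n : ℕ∞) (f : X → S → ℝ) : PartUnitySkelOn n f ∅ :=
  fun _ ha => (Set.notMem_empty _ ha).elim

variable [MetricSpace X]

theorem lipschitzEpsOn_empty (ε : ℝ) (f : X → S → ℝ) : LipschitzEpsOn ε f ∅ :=
  fun _ hx => (Set.notMem_empty _ hx).elim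

theorem coboundedOn_empty (K : ℝ) (f : X → S → ℝ) : CoboundedOn K f ∅ := fun _ => by
  rw [Set.sep_empty]
  exact Metric.ediam_empty.trans_le zero_le

end EmptyDomain

theorem LsExtDimLE.exists_partUnitySkelOn {X : Type u} [MetricSpace X] {n : ℕ∞} {Dα : Set ℝ}
    {α : ℝ → ℝ} {M : ℝ → ℝ → ℝ} (hX : LsExtDimLE X n Dα α M) (S : Type u)
    (hS : Cardinal.mk (X × ℕ) < Cardinal.mk S) {K : ℝ} (hK : 0 < K) {δ : ℝ} (hδ : δ ∈ Dα) :
    ∃ g : X → S → ℝ, PartUnitySkelOn n g Set.univ ∧ LipschitzEpsOn δ g Set.univ ∧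
      CoboundedOn (M δ K) g Set.univ := by
  obtain ⟨g, -, hg⟩ := hX S hS K hK δ hδ ∅ (fun _ _ => 0) (partUnitySkelOn_empty n _)
    (lipschitzEpsOn_empty _ _) (coboundedOn_empty K _)
  exact ⟨g, hg⟩

/-- Theorem 6.4, (2) ⇒ (1). If `LsExtDim(X, α, M) ≤ n` for some
`α : (0,∞) → (0,∞)` and `M : (0,∞) × (0,∞) → (0,∞)`, then for each `ε > 0` there is an
`(ε,ε)`-Lipschitz partition of unity `f : X → Δ(S)⁽ⁿ⁾` with `{f⁻¹(st v)}` uniformly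
bounded. -/
theorem stmt8 {X : Type u} [MetricSpace X] (n : ℕ∞) (S : Type u)
    (hS : Cardinal.mk (X × ℕ) < Cardinal.mk S)
    (h : ∃ α : ℝ → ℝ, ∃ M : ℝ → ℝ → ℝ, (∀ δ > (0:ℝ), 0 < α δ) ∧
      (∀ δ > (0:ℝ), ∀ K > (0:ℝ), 0 < M δ K) ∧ LsExtDimLE X n (Set.Ioi 0) α M) :
    ∀ ε > (0:ℝ), ∃ f : X → S → ℝ, PartUnitySkelOn n f Set.univ ∧
      LipschitzEpsOn ε f Set.univ ∧ ∃ M' : ℝ, 0 < M' ∧ CoboundedOn M' f Set.univ := by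
  intro ε hε
  obtain ⟨α, M, -, hM, hX⟩ := h
  obtain ⟨g, hg, hgLip, hgCob⟩ := hX.exists_partUnitySkelOn S hS one_pos hε
  exact ⟨g, hg, hgLip, M ε 1, hM ε hε 1 one_pos, hgCob⟩
end

section
/- If a metric space X is of straight finite decomposition complexity, then X is of countable asymptotic dimension. -/
/-- `U` can be expressed as a union of at most `k` families from `𝒱` that are
`R`-disjoint. -/
def UnionOfFams {X : Type*} [MetricSpace X] (k : ℕ) (R : ℝ) (𝒱 : Set (Set X))
    (U : Set X) : Prop :=
  ∃ 𝒲 : Fin k → Set (Set X), (∀ j, 𝒲 j ⊆ 𝒱 ∧ RDisjointFam R (𝒲 j)) ∧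
    U = ⋃ j, ⋃₀ 𝒲 j

/-- `X` is of countable asymptotic dimension (Definition 7.1). -/
def CountableAsdim (X : Type*) [MetricSpace X] : Prop :=
  ∃ nseq : ℕ → ℕ, (∀ i, 1 ≤ nseq i) ∧
    ∀ R : ℕ → ℝ, (∀ i, 0 < R i) →
      ∃ 𝒱 : ℕ → Set (Set X), 𝒱 1 = {Set.univ} ∧
        (∀ i, 1 ≤ i → ∀ U ∈ 𝒱 i, UnionOfFams (nseq i) (R i) (𝒱 (i + 1)) U) ∧
        ∃ m, 1 ≤ m ∧ UnifBounded (𝒱 m)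

/-- `X` is of straight finite decomposition complexity (Dranishnikov–Zarichnyi). -/
def SFDC (X : Type*) [MetricSpace X] : Prop :=
  ∀ R : ℕ → ℝ, (∀ i, 0 < R i) → StrictMono R →
    ∃ n : ℕ, 1 ≤ n ∧ ∃ 𝒱 : ℕ → Set (Set X), 𝒱 1 = {Set.univ} ∧
      (∀ i, 1 ≤ i → i < n → ∀ U ∈ 𝒱 i, UnionOfFams 2 (R i) (𝒱 (i + 1)) U) ∧
      UnifBounded (𝒱 n)

/-!
Given radii `R`, apply straight finite decomposition complexity to a strictly increasing
majorant `S ≥ R`. This yields finitely many families `𝒱 1, …, 𝒱 n`, each member split into two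
`S i`-disjoint, hence `R i`-disjoint, subfamilies; extend the sequence by `𝒱 i := 𝒱 n` for
`i ≥ n`, where each member `U` is split trivially as `{U} ∪ {U}`. So `nᵢ = 2` works.
-/

theorem exists_strictMono_ge (R : ℕ → ℝ) : ∃ S : ℕ → ℝ, StrictMono S ∧ ∀ i, R i ≤ S i := by
  refine ⟨fun i => ∑ j ∈ Finset.range (i + 1), max (R j) 1, strictMono_nat_of_lt_succ fun i => ?_,
    fun i => ?_⟩
  · rw [Finset.sum_range_succ _ (i + 1)]
    linarith [le_max_right (R (i + 1)) 1]
  · calc R i ≤ max (R i) 1 := le_max_left _ _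
      _ ≤ ∑ j ∈ Finset.range (i + 1), max (R j) 1 :=
        Finset.single_le_sum (fun j _ => zero_le_one.trans (le_max_right _ _))
          (Finset.self_mem_range_succ i)

section

variable {X : Type*} [MetricSpace X]

theorem RDisjointFam.mono {R R' : ℝ} {𝒲 : Set (Set X)} (hR : R ≤ R') (h : RDisjointFam R' 𝒲) :
    RDisjointFam R 𝒲 :=
  fun U hU V hV hUV x hx y hy => hR.trans_lt (h U hU V hV hUV x hx y hy)

theorem RDisjointFam.singleton (R : ℝ) (U : Set X) : RDisjointFam R {U} := by
  rintro A rfl B rfl hAB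
  exact absurd rfl hAB

theorem UnionOfFams.mono {k : ℕ} {R R' : ℝ} {𝒱 : Set (Set X)} {U : Set X} (hR : R ≤ R')
    (h : UnionOfFams k R' 𝒱 U) : UnionOfFams k R 𝒱 U := by
  obtain ⟨𝒲, h𝒲, rfl⟩ := h
  exact ⟨𝒲, fun j => ⟨(h𝒲 j).1, (h𝒲 j).2.mono hR⟩, rfl⟩

theorem UnionOfFams.of_mem {k : ℕ} [NeZero k] (R : ℝ) {𝒱 : Set (Set X)} {U : Set X}
    (hU : U ∈ 𝒱) : UnionOfFams k R 𝒱 U :=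
  ⟨fun _ => {U}, fun _ => ⟨Set.singleton_subset_iff.2 hU, .singleton R U⟩,
    by simp only [Set.sUnion_singleton, Set.iUnion_const]⟩

end

/-- Proposition 7.2. Every metric space of straight finite decomposition
complexity is of countable asymptotic dimension. -/
theorem stmt11 {X : Type*} [MetricSpace X] (h : SFDC X) : CountableAsdim X := by
  refine ⟨fun _ => 2, fun _ => one_le_two, fun R hR => ?_⟩
  obtain ⟨S, hS, hRS⟩ := exists_strictMono_ge R
  obtain ⟨n, hn, 𝒱, h𝒱₁, hsplit, hbdd⟩ := h S (fun i => (hR i).trans_le (hRS i)) hS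
  refine ⟨fun i => 𝒱 (min i n), by simpa only [min_eq_left hn], fun i hi U hU => ?_, n, hn,
    by simpa only [min_self]⟩
  dsimp only at hU ⊢
  rcases lt_or_ge i n with hin | hni
  · rw [min_eq_left hin.le] at hU
    rw [min_eq_left (Nat.succ_le_of_lt hin)]
    exact (hsplit i hi hin U hU).mono (hRS i)
  · rw [min_eq_right hni] at hU
    rw [min_eq_right (Nat.le_succ_of_le hni)]
    exact .of_mem (R i) hU
end

section
/- If a metric space X is of countable asymptotic dimension, then for every set S of cardinality bigger than card(X × ℕ) and every ε > 0 there exists an (ε,ε)-Lipschitz partition of unity g : X → Δ(S) that is K-cobounded for some K > 0. -/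
universe u

/-- `f` is a partition of unity on `A` with values in `Δ(S)`. -/
def PartUnityOn {X S : Type*} (f : X → S → ℝ) (A : Set X) : Prop :=
  ∀ a ∈ A, IsDelta (f a)

/-! The countable asymptotic dimension of `X` yields a tree of covers: the children of a set `U`
of level `k` cover `U` and split into `n k` colour classes of sets that are far apart. Normalised
bump functions `max (r_k - d(x, V), 0)` on the children of `U` form a partition of unity near `U`;
at most `n k` of them are nonzero at a point, so this partition is `4 n_k / β_k`-Lipschitz, where
`β_k = r_k - r_{k-1}` is the gap between consecutive radii. Multiplying these partitions along the
chains from the root `X` down to the uniformly bounded level gives a partition of unity indexed by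
chains. With `β_k ≈ 2 ^ k n_k / ε` the Lipschitz constants add up to `ε / 2` at small distances,
while at distances above `2 / ε` the trivial bound `2` on the `l¹` distance suffices. A chain's
weight is supported near its last set, which has bounded diameter. A chain is determined by a
point and a colour per level, so there are at most `card (X × ℕ)` chains and they embed into `S`.
-/

open Function Set Metric

section Finsum

variable {α β : Type*}

lemma finsum_mem_eq_finsum_of_support_subset {f : α → ℝ} {s : Set α} (h : support f ⊆ s) :
    ∑ᶠ a ∈ s, f a = ∑ᶠ a, f a := by
  rw [finsum_mem_def, indicator_eq_self.2 h]

lemma abs_finsum_le_finsum_abs {f : α → ℝ} (hf : HasFiniteSupport f) :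
    |∑ᶠ a, f a| ≤ ∑ᶠ a, |f a| := by
  have hsub : support f ⊆ hf.toFinset := (Set.Finite.coe_toFinset hf).ge
  rw [finsum_eq_sum_of_support_subset f hsub,
    finsum_eq_sum_of_support_subset (|f ·|) (fun a ha => hsub (by simpa using ha))]
  exact Finset.abs_sum_le_sum_abs _ _

lemma finsum_div_finsum_le_one (f : α → ℝ) :
    ∑ᶠ a, f a / ∑ᶠ b, f b ≤ 1 := by
  simp_rw [div_eq_mul_inv]
  rw [← finsum_mul, ← div_eq_mul_inv]
  exact div_self_le_one _

lemma finsum_div_finsum_eq_one {f : α → ℝ} (h : ∑ᶠ b, f b ≠ 0) :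
    ∑ᶠ a, f a / ∑ᶠ b, f b = 1 := by
  simp_rw [div_eq_mul_inv]
  rw [← finsum_mul, ← div_eq_mul_inv, div_self h]

lemma finsum_abs_div_finsum_sub_le {f g : α → ℝ} (hf : HasFiniteSupport f)
    (hg : HasFiniteSupport g) (hg0 : ∀ a, 0 ≤ g a) (hF : 0 < ∑ᶠ a, f a) (hG : 0 < ∑ᶠ a, g a) :
    ∑ᶠ a, |f a / ∑ᶠ b, f b - g a / ∑ᶠ b, g b| ≤ 2 * (∑ᶠ a, |f a - g a|) / ∑ᶠ a, f a := by
  set F := ∑ᶠ a, f a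
  set G := ∑ᶠ a, g a
  set D := ∑ᶠ a, |f a - g a|
  have hGF : |G - F| ≤ D := by
    rw [← finsum_sub_distrib hg hf]
    exact (abs_finsum_le_finsum_abs (by fun_prop)).trans_eq
      (finsum_congr fun a => abs_sub_comm _ _)
  have hpt : ∀ a, |f a / F - g a / G| ≤ |f a - g a| / F + g a * (|G - F| / (F * G)) := by
    intro a
    have : f a / F - g a / G = (f a - g a) / F + g a * ((G - F) / (F * G)) := by
      field_simp; ring
    rw [this]
    refine (abs_add_le _ _).trans_eq ?_
    rw [abs_div, abs_mul, abs_div, abs_of_pos hF, abs_of_nonneg (hg0 a), abs_of_pos (mul_pos hF hG)]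
  calc ∑ᶠ a, |f a / F - g a / G|
      ≤ ∑ᶠ a, (|f a - g a| / F + g a * (|G - F| / (F * G))) :=
        finsum_le_finsum' (by fun_prop (disch := simp)) (by fun_prop (disch := simp)) hpt
    _ = D * F⁻¹ + G * (|G - F| * (F * G)⁻¹) := by
        simp only [div_eq_mul_inv]
        rw [finsum_add_distrib (by fun_prop (disch := simp)) (by fun_prop), ← finsum_mul,
          ← finsum_mul]
    _ = (D + |G - F|) / F := by field_simp
    _ ≤ 2 * D / F := by gcongr; linarith

lemma finsum_abs_mul_sub_mul_le {a b : ℝ} {F G : α → ℝ} (hF : HasFiniteSupport F)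
    (hG : HasFiniteSupport G) (hG0 : ∀ i, 0 ≤ G i) :
    ∑ᶠ i, |a * F i - b * G i| ≤ |a - b| * ∑ᶠ i, G i + |a| * ∑ᶠ i, |F i - G i| := by
  rw [mul_finsum, mul_finsum,
    ← finsum_add_distrib (by fun_prop) (by fun_prop (disch := simp))]
  refine finsum_le_finsum' (by fun_prop (disch := simp)) (by fun_prop (disch := simp))
    fun i => ?_
  calc |a * F i - b * G i| = |(a - b) * G i + a * (F i - G i)| := by ring_nf
    _ ≤ |a - b| * G i + |a| * |F i - G i| := by
        refine (abs_add_le _ _).trans_eq ?_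
        rw [abs_mul, abs_mul, abs_of_nonneg (hG0 i)]

lemma finsum_fin_succ_pi {M : Type*} [AddCommMonoid M] {j : ℕ} {F : (Fin (j + 1) → α) → M}
    (hF : HasFiniteSupport F) : ∑ᶠ c, F c = ∑ᶠ a, ∑ᶠ c : Fin j → α, F (Fin.cons a c) := by
  rw [← finsum_comp_equiv (Fin.consEquiv fun _ => α), finsum_curry]
  · rfl
  · exact hF.comp_of_injective (Fin.consEquiv _).injective

lemma hasFiniteSupport_fin_cons_mul {j : ℕ} {f : α → ℝ} {F : α → (Fin j → α) → ℝ}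
    (hf : HasFiniteSupport f) (hF : ∀ a, f a ≠ 0 → HasFiniteSupport (F a)) :
    HasFiniteSupport fun c : Fin (j + 1) → α => f (c 0) * F (c 0) (Fin.tail c) := by
  refine ((hf.biUnion fun a ha => (finite_singleton a).prod (hF a ha)).image
    fun q => Fin.cons q.1 q.2).subset fun c hc => ?_
  obtain ⟨h0, h1⟩ := mul_ne_zero_iff.1 hc
  exact ⟨(c 0, Fin.tail c), mem_biUnion h0 ⟨rfl, h1⟩, Fin.cons_self_tail c⟩

lemma finsum_extend_zero {e : α → β} (he : Injective e) (f : α → ℝ) :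
    ∑ᶠ b, extend e f 0 b = ∑ᶠ a, f a := by
  rw [← finsum_mem_eq_finsum_of_support_subset
    ((support_extend_zero_subset).trans (image_subset_range _ _)), finsum_mem_range he]
  exact finsum_congr fun a => he.extend_apply f 0 a

lemma abs_extend_zero_sub {e : α → β} (he : Injective e) (f g : α → ℝ) (b : β) :
    |extend e f 0 b - extend e g 0 b| = extend e (fun a => |f a - g a|) 0 b := by
  by_cases hb : ∃ a, e a = b
  · obtain ⟨a, rfl⟩ := hb
    simp only [he.extend_apply]
  · simp [extend_apply' _ _ _ hb]

lemma extend_zero_nonneg {e : α → β} {f : α → ℝ} (hf : ∀ a, 0 ≤ f a) (b : β) :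
    0 ≤ extend e f 0 b := by
  classical
  by_cases hb : ∃ a, e a = b
  · rw [extend_def, dif_pos hb]; exact hf _
  · rw [extend_apply' _ _ _ hb]; rfl

lemma finsum_abs_sub_le_add {f g : α → ℝ} (hf : HasFiniteSupport f)
    (hg : HasFiniteSupport g) (hf0 : ∀ a, 0 ≤ f a) (hg0 : ∀ a, 0 ≤ g a) :
    ∑ᶠ a, |f a - g a| ≤ ∑ᶠ a, f a + ∑ᶠ a, g a := by
  rw [← finsum_add_distrib hf hg]
  refine finsum_le_finsum' (by fun_prop (disch := simp)) (by fun_prop) fun a => ?_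
  rw [abs_le]
  constructor <;> linarith [hf0 a, hg0 a]

lemma finsum_extend_subtype {s : Set α} {e : s → β} (he : Injective e) {f : α → ℝ}
    (hf : support f ⊆ s) : ∑ᶠ b, extend e (fun a : s => f a) 0 b = ∑ᶠ a, f a := by
  rw [finsum_extend_zero he, finsum_set_coe_eq_finsum_mem,
    finsum_mem_eq_finsum_of_support_subset hf]

end Finsum

section Relabel

variable {X A S : Type*} {s : Set A} {ι : s → S} {g : X → A → ℝ} {B : Set X}

lemma PartUnityOn.extend (hι : Injective ι) (hs : ∀ x, support (g x) ⊆ s)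
    (hg : PartUnityOn g B) : PartUnityOn (fun x => Function.extend ι (fun a : s => g x a) 0) B :=
  fun x hx =>
    ⟨extend_zero_nonneg fun a => (hg x hx).1 a,
      (((hg x hx).2.1.preimage Subtype.val_injective.injOn).image ι).subset
        support_extend_zero_subset,
      by rw [finsum_extend_subtype hι (hs x)]; exact (hg x hx).2.2⟩

lemma LipschitzEpsOn.extend [MetricSpace X] {ε : ℝ} (hι : Injective ι)
    (hs : ∀ x, support (g x) ⊆ s) (hg : LipschitzEpsOn ε g B) :
    LipschitzEpsOn ε (fun x => Function.extend ι (fun a : s => g x a) 0) B := by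
  intro x hx y hy
  have hsub : support (fun a => |g x a - g y a|) ⊆ s := fun a ha => by
    by_contra has
    simp [notMem_support.1 (notMem_subset (hs x) has), notMem_support.1 (notMem_subset (hs y) has)]
      at ha
  unfold l1dist
  simp_rw [abs_extend_zero_sub hι]
  rw [finsum_extend_subtype hι hsub]
  exact hg x hx y hy

lemma CoboundedOn.extend [MetricSpace X] {K : ℝ} (hι : Injective ι) (hg : CoboundedOn K g B) :
    CoboundedOn K (fun x => Function.extend ι (fun a : s => g x a) 0) B := by
  intro v
  by_cases hv : ∃ a, ι a = v
  · obtain ⟨a, rfl⟩ := hv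
    simpa only [hι.extend_apply] using hg a
  · have : {x | x ∈ B ∧ 0 < Function.extend ι (fun a : s => g x a) 0 v} = ∅ := by
      simp [extend_apply' _ _ _ hv]
    rw [this]
    exact ediam_empty.trans_le zero_le

end Relabel

lemma ediam_le_of_forall_infDist_le {X : Type*} [MetricSpace X] {A W : Set X} {M τ : ℝ}
    (hW : W.Nonempty) (hWM : ediam W ≤ ENNReal.ofReal M) (hM : 0 ≤ M)
    (hA : ∀ x ∈ A, infDist x W ≤ τ) : ediam A ≤ ENNReal.ofReal (M + 2 * (τ + 1)) := by
  refine ediam_le fun x hx y hy => ?_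
  obtain ⟨a, ha, hxa⟩ := (infDist_lt_iff hW).1 ((hA x hx).trans_lt (lt_add_one τ))
  obtain ⟨b, hb, hyb⟩ := (infDist_lt_iff hW).1 ((hA y hy).trans_lt (lt_add_one τ))
  have hab : dist a b ≤ M := by
    have := (edist_le_ediam_of_mem ha hb).trans hWM
    rwa [edist_dist, ENNReal.ofReal_le_ofReal_iff hM] at this
  rw [edist_dist]
  exact ENNReal.ofReal_le_ofReal (by linarith [dist_triangle4 x a b y, dist_comm y b])

section Bump

variable {X : Type*} [MetricSpace X]

structure IsSeparatedColoring (C : Set (Set X)) (col : Set X → ℕ) (N : ℕ) (R : ℝ) : Prop where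
  nonempty : ∀ V ∈ C, V.Nonempty
  lt : ∀ V ∈ C, col V < N
  lt_dist : ∀ V ∈ C, ∀ W ∈ C, V ≠ W → col V = col W → ∀ v ∈ V, ∀ w ∈ W, R < dist v w

noncomputable def bumpWeight (C : Set (Set X)) (r : ℝ) (x : X) : Set X → ℝ :=
  C.indicator fun V => max (r - infDist x V) 0

lemma bumpWeight_nonneg (C : Set (Set X)) (r : ℝ) (x : X) (V : Set X) :
    0 ≤ bumpWeight C r x V :=
  indicator_nonneg (fun _ _ => le_max_right _ _) V

lemma bumpWeight_ne_zero {C : Set (Set X)} {r : ℝ} {x : X} {V : Set X} :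
    bumpWeight C r x V ≠ 0 ↔ V ∈ C ∧ infDist x V < r := by
  by_cases hV : V ∈ C <;> simp [bumpWeight, hV]

lemma abs_bumpWeight_sub_le (C : Set (Set X)) (r : ℝ) (x y : X) (V : Set X) :
    |bumpWeight C r x V - bumpWeight C r y V| ≤ dist x y := by
  by_cases hV : V ∈ C
  · simp only [bumpWeight, indicator_of_mem hV]
    refine (abs_max_sub_max_le_abs _ _ _).trans ?_
    rw [sub_sub_sub_cancel_left, ← Real.dist_eq, dist_comm x y]
    simpa using (lipschitz_infDist_pt V).dist_le_mul y x
  · simp [bumpWeight, hV]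

namespace IsSeparatedColoring

variable {C : Set (Set X)} {col : Set X → ℕ} {N : ℕ} {r : ℝ}

lemma injOn_support_bumpWeight (h : IsSeparatedColoring C col N (2 * r)) (x : X) :
    InjOn col (support (bumpWeight C r x)) := by
  intro V hV W hW hcol
  by_contra hVW
  obtain ⟨hVC, hVx⟩ := bumpWeight_ne_zero.1 hV
  obtain ⟨hWC, hWx⟩ := bumpWeight_ne_zero.1 hW
  obtain ⟨v, hv, hxv⟩ := (infDist_lt_iff (h.nonempty V hVC)).1 hVx
  obtain ⟨w, hw, hxw⟩ := (infDist_lt_iff (h.nonempty W hWC)).1 hWx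
  have := h.lt_dist V hVC W hWC hVW hcol v hv w hw
  linarith [dist_triangle_left v w x]

lemma hasFiniteSupport_bumpWeight (h : IsSeparatedColoring C col N (2 * r)) (x : X) :
    HasFiniteSupport (bumpWeight C r x) :=
  Finite.of_injOn (fun V hV => h.lt V (bumpWeight_ne_zero.1 hV).1) (h.injOn_support_bumpWeight x)
    (finite_Iio N)

lemma ncard_support_bumpWeight_le (h : IsSeparatedColoring C col N (2 * r)) (x : X) :
    (support (bumpWeight C r x)).ncard ≤ N :=
  (ncard_le_ncard_of_injOn col (t := Iio N) (fun V hV => h.lt V (bumpWeight_ne_zero.1 hV).1)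
    (h.injOn_support_bumpWeight x)).trans_eq (ncard_Iio_nat N)

lemma finsum_abs_bumpWeight_sub_le (h : IsSeparatedColoring C col N (2 * r)) (x y : X) :
    ∑ᶠ V, |bumpWeight C r x V - bumpWeight C r y V| ≤ 2 * N * dist x y := by
  set A := support (bumpWeight C r x) ∪ support (bumpWeight C r y)
  have hA : A.Finite := (h.hasFiniteSupport_bumpWeight x).union (h.hasFiniteSupport_bumpWeight y)
  have hsupp : support (fun V => |bumpWeight C r x V - bumpWeight C r y V|) ⊆ hA.toFinset := by
    rw [Finite.coe_toFinset]
    intro V hV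
    by_contra hVA
    simp only [A, mem_union, mem_support, not_or, not_not] at hVA
    simp [hVA.1, hVA.2] at hV
  have hcard : (hA.toFinset.card : ℝ) ≤ 2 * N := by
    rw [← ncard_eq_toFinset_card A hA]
    have := (ncard_union_le _ _).trans (add_le_add (h.ncard_support_bumpWeight_le x)
      (h.ncard_support_bumpWeight_le y))
    exact_mod_cast this.trans_eq (two_mul N).symm
  rw [finsum_eq_sum_of_support_subset _ hsupp]
  calc ∑ V ∈ hA.toFinset, |bumpWeight C r x V - bumpWeight C r y V|
      ≤ ∑ _V ∈ hA.toFinset, dist x y :=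
        Finset.sum_le_sum fun V _ => abs_bumpWeight_sub_le C r x y V
    _ = hA.toFinset.card * dist x y := by rw [Finset.sum_const, nsmul_eq_mul]
    _ ≤ 2 * N * dist x y := by gcongr

lemma sub_infDist_le_finsum_bumpWeight (h : IsSeparatedColoring C col N (2 * r)) (x : X)
    (hC : (⋃₀ C).Nonempty) : r - infDist x (⋃₀ C) ≤ ∑ᶠ V, bumpWeight C r x V := by
  rw [sub_le_comm, le_infDist hC]
  rintro u ⟨V, hVC, huV⟩
  have hle : bumpWeight C r x V ≤ ∑ᶠ W, bumpWeight C r x W :=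
    single_le_finsum V (h.hasFiniteSupport_bumpWeight x) (bumpWeight_nonneg C r x)
  have : r - infDist x V ≤ bumpWeight C r x V := by
    simp only [bumpWeight, indicator_of_mem hVC]; exact le_max_left _ _
  linarith [infDist_le_dist_of_mem huV (x := x)]

lemma mono {R R' : ℝ} (h : IsSeparatedColoring C col N R) (hR : R' ≤ R) :
    IsSeparatedColoring C col N R' :=
  ⟨h.nonempty, h.lt, fun V hV W hW hVW hc v hv w hw =>
    hR.trans_lt (h.lt_dist V hV W hW hVW hc v hv w hw)⟩

end IsSeparatedColoring

end Bump

lemma UnionOfFams.exists_isSeparatedColoring {X : Type*} [MetricSpace X] {N : ℕ} {R : ℝ}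
    {𝒱 : Set (Set X)} {U : Set X} (h : UnionOfFams N R 𝒱 U) :
    ∃ C ⊆ 𝒱, ⋃₀ C = U ∧ ∃ col, IsSeparatedColoring C col N R := by
  classical
  obtain ⟨𝒲, h𝒲, rfl⟩ := h
  refine ⟨{V | V.Nonempty ∧ ∃ j, V ∈ 𝒲 j}, fun V ⟨_, j, hV⟩ => (h𝒲 j).1 hV, ?_,
    fun V => if hV : ∃ j, V ∈ 𝒲 j then hV.choose else 0, fun V hV => hV.1, ?_, ?_⟩
  · ext x
    simp only [mem_sUnion, mem_iUnion, mem_ofPred_eq]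
    constructor
    · rintro ⟨V, ⟨-, j, hV⟩, hx⟩
      exact ⟨j, V, hV, hx⟩
    · rintro ⟨j, V, hV, hx⟩
      exact ⟨V, ⟨⟨x, hx⟩, j, hV⟩, hx⟩
  · rintro V ⟨-, hV⟩
    simp only [dif_pos hV, Fin.is_lt]
  · rintro V ⟨-, hV⟩ W ⟨-, hW⟩ hVW hcol
    simp only [dif_pos hV, dif_pos hW, Fin.val_inj] at hcol
    exact (h𝒲 hW.choose).2 V (hcol ▸ hV.choose_spec) W hW.choose_spec hVW

structure RefinementTree (X : Type*) [MetricSpace X] (n : ℕ → ℕ) (r : ℕ → ℝ) where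
  IsNode : ℕ → Set X → Prop
  child : ℕ → Set X → Set (Set X)
  color : ℕ → Set X → Set X → ℕ
  isNode_zero_univ : IsNode 0 univ
  nonempty {k : ℕ} {U : Set X} : IsNode k U → U.Nonempty
  isNode_of_mem_child {k : ℕ} {U V : Set X} : IsNode k U → V ∈ child k U → IsNode (k + 1) V
  sUnion_child {k : ℕ} {U : Set X} : IsNode k U → ⋃₀ child k U = U
  isSeparatedColoring {k : ℕ} {U : Set X} :
    IsNode k U → IsSeparatedColoring (child k U) (color k U) (n k) (2 * r k)

/-- Level `k` of the tree is the family `𝒱 (k + 1)` of the definition. -/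
theorem CountableAsdim.exists_refinementTree {X : Type*} [MetricSpace X] [Nonempty X]
    (h : CountableAsdim X) :
    ∃ n : ℕ → ℕ, ∀ r : ℕ → ℝ, ∃ T : RefinementTree X n r, ∃ m : ℕ, ∃ M : ℝ, 0 < M ∧
      ∀ U, T.IsNode m U → ediam U ≤ ENNReal.ofReal M := by
  obtain ⟨nseq, -, h⟩ := h
  refine ⟨fun k => nseq (k + 1), fun r => ?_⟩
  obtain ⟨𝒱, h𝒱1, hsplit, m, hm, M, hM, hMb⟩ :=
    h (fun i => 2 * |r (i - 1)| + 1) fun i => by positivity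
  have hcol : ∀ k U, ∃ C : Set (Set X), ∃ col : Set X → ℕ, U ∈ 𝒱 (k + 1) →
      C ⊆ 𝒱 (k + 2) ∧ ⋃₀ C = U ∧ IsSeparatedColoring C col (nseq (k + 1)) (2 * r k) := by
    intro k U
    by_cases hU : U ∈ 𝒱 (k + 1)
    · obtain ⟨C, hC𝒱, hCU, col, hC⟩ :=
        (hsplit (k + 1) (Nat.le_add_left 1 k) U hU).exists_isSeparatedColoring
      refine ⟨C, col, fun _ => ⟨hC𝒱, hCU, hC.mono ?_⟩⟩
      simp only [Nat.add_sub_cancel]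
      linarith [le_abs_self (r k)]
    · exact ⟨∅, fun _ => 0, fun h => absurd h hU⟩
  choose C col hC using hcol
  refine ⟨⟨fun k U => U ∈ 𝒱 (k + 1) ∧ U.Nonempty, C, col, ⟨by simp [h𝒱1], univ_nonempty⟩,
    fun hU => hU.2, fun hU hV => ⟨(hC _ _ hU.1).1 hV, (hC _ _ hU.1).2.2.nonempty _ hV⟩,
    fun hU => (hC _ _ hU.1).2.1, fun hU => (hC _ _ hU.1).2.2⟩, m - 1, M, hM, fun U hU => ?_⟩
  exact hMb U (by simpa [Nat.sub_add_cancel hm] using hU.1)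

def chainEnd {α : Type*} : (j : ℕ) → α → (Fin j → α) → α
  | 0, a, _ => a
  | j + 1, _, c => chainEnd j (c 0) (Fin.tail c)

namespace RefinementTree

variable {X : Type u} [MetricSpace X] {n : ℕ → ℕ} {r : ℕ → ℝ} (T : RefinementTree X n r)
  {k j : ℕ} {U V : Set X} {x y : X}

/-- Where all bumps vanish, the quotient is `0 / 0 = 0`, so the masses are always at most `1`. -/
noncomputable def levelPartition (k : ℕ) (U : Set X) (x : X) (V : Set X) : ℝ :=
  bumpWeight (T.child k U) (r k) x V / ∑ᶠ W, bumpWeight (T.child k U) (r k) x W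

lemma levelPartition_nonneg : 0 ≤ T.levelPartition k U x V :=
  div_nonneg (bumpWeight_nonneg _ _ _ _) (finsum_nonneg (bumpWeight_nonneg _ _ _))

lemma levelPartition_ne_zero (h : T.levelPartition k U x V ≠ 0) :
    V ∈ T.child k U ∧ infDist x V < r k :=
  bumpWeight_ne_zero.1 (div_ne_zero_iff.1 h).1

lemma hasFiniteSupport_levelPartition (hU : T.IsNode k U) (x : X) :
    HasFiniteSupport (T.levelPartition k U x) :=
  ((T.isSeparatedColoring hU).hasFiniteSupport_bumpWeight x).subset
    fun _ hV => (div_ne_zero_iff.1 hV).1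

lemma finsum_levelPartition_le_one : ∑ᶠ V, T.levelPartition k U x V ≤ 1 :=
  finsum_div_finsum_le_one _

lemma sub_infDist_le_finsum_bumpWeight (hU : T.IsNode k U) (x : X) :
    r k - infDist x U ≤ ∑ᶠ V, bumpWeight (T.child k U) (r k) x V := by
  have := (T.isSeparatedColoring hU).sub_infDist_le_finsum_bumpWeight x
    ((T.sUnion_child hU).symm ▸ T.nonempty hU)
  rwa [T.sUnion_child hU] at this

lemma finsum_levelPartition_eq_one (hU : T.IsNode k U) (hx : infDist x U < r k) :
    ∑ᶠ V, T.levelPartition k U x V = 1 :=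
  finsum_div_finsum_eq_one (by linarith [T.sub_infDist_le_finsum_bumpWeight hU x] : (0 : ℝ) < _).ne'

lemma finsum_abs_levelPartition_sub_le (hU : T.IsNode k U) {b : ℝ} (hb : 0 < b)
    (hx : infDist x U + b ≤ r k) (hxy : dist x y < b) :
    ∑ᶠ V, |T.levelPartition k U x V - T.levelPartition k U y V| ≤ 4 * n k / b * dist x y := by
  have hC := T.isSeparatedColoring hU
  have hσx := T.sub_infDist_le_finsum_bumpWeight hU x
  have hσy := T.sub_infDist_le_finsum_bumpWeight hU y
  have hyx := infDist_le_infDist_add_dist (x := y) (y := x) (s := U)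
  rw [dist_comm] at hyx
  calc _ ≤ 2 * (∑ᶠ V, |bumpWeight (T.child k U) (r k) x V - bumpWeight (T.child k U) (r k) y V|)
          / ∑ᶠ V, bumpWeight (T.child k U) (r k) x V :=
        finsum_abs_div_finsum_sub_le (hC.hasFiniteSupport_bumpWeight x)
          (hC.hasFiniteSupport_bumpWeight y) (bumpWeight_nonneg _ _ _) (by linarith)
          (by linarith)
    _ ≤ 2 * (2 * n k * dist x y) / b := by
        gcongr
        · exact hC.finsum_abs_bumpWeight_sub_le x y
        · linarith
    _ = 4 * n k / b * dist x y := by ring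

noncomputable def chainWeight : (j : ℕ) → ℕ → Set X → X → (Fin j → Set X) → ℝ
  | 0, _, _, _, _ => 1
  | j + 1, k, U, x, c =>
    T.levelPartition k U x (c 0) * chainWeight j (k + 1) (c 0) x (Fin.tail c)

lemma chainWeight_cons (c : Fin j → Set X) :
    T.chainWeight (j + 1) k U x (Fin.cons V c) =
      T.levelPartition k U x V * T.chainWeight j (k + 1) V x c := by
  simp [chainWeight]

lemma chainWeight_nonneg (c : Fin j → Set X) : 0 ≤ T.chainWeight j k U x c := by
  induction j generalizing k U with
  | zero => exact zero_le_one
  | succ j ih => exact mul_nonneg T.levelPartition_nonneg (ih _)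

lemma hasFiniteSupport_chainWeight (hU : T.IsNode k U) (x : X) :
    HasFiniteSupport (T.chainWeight j k U x) := by
  induction j generalizing k U with
  | zero => exact toFinite _
  | succ j ih =>
    exact hasFiniteSupport_fin_cons_mul (T.hasFiniteSupport_levelPartition hU x)
      fun V hV => ih (T.isNode_of_mem_child hU (T.levelPartition_ne_zero hV).1)

lemma finsum_chainWeight_succ (hU : T.IsNode k U) (x : X) :
    ∑ᶠ c, T.chainWeight (j + 1) k U x c =
      ∑ᶠ V, T.levelPartition k U x V * ∑ᶠ c, T.chainWeight j (k + 1) V x c := by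
  rw [finsum_fin_succ_pi (T.hasFiniteSupport_chainWeight hU x)]
  simp_rw [chainWeight_cons, mul_finsum]

lemma finsum_chainWeight_le_one (hU : T.IsNode k U) (x : X) :
    ∑ᶠ c, T.chainWeight j k U x c ≤ 1 := by
  induction j generalizing k U with
  | zero => simp [chainWeight, finsum_unique]
  | succ j ih =>
    have hp := T.hasFiniteSupport_levelPartition hU x
    rw [T.finsum_chainWeight_succ hU]
    refine (finsum_le_finsum' (by fun_prop) hp fun V => ?_).trans T.finsum_levelPartition_le_one
    by_cases hV : T.levelPartition k U x V = 0
    · simp [hV]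
    · exact mul_le_of_le_one_right T.levelPartition_nonneg
        (ih (T.isNode_of_mem_child hU (T.levelPartition_ne_zero hV).1))

lemma finsum_chainWeight_eq_one {t : ℕ → ℝ} (htr : ∀ k, t k < r k)
    (hrt : ∀ k, r k ≤ t (k + 1)) (hU : T.IsNode k U) (hx : infDist x U ≤ t k) :
    ∑ᶠ c, T.chainWeight j k U x c = 1 := by
  induction j generalizing k U with
  | zero => simp [chainWeight, finsum_unique]
  | succ j ih =>
    rw [T.finsum_chainWeight_succ hU, ← T.finsum_levelPartition_eq_one hU (hx.trans_lt (htr k))]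
    refine finsum_congr fun V => ?_
    by_cases hV : T.levelPartition k U x V = 0
    · simp [hV]
    · obtain ⟨hVU, hxV⟩ := T.levelPartition_ne_zero hV
      rw [ih (T.isNode_of_mem_child hU hVU) (hxV.le.trans (hrt k)), mul_one]

lemma isNode_chainEnd_of_chainWeight_ne_zero {t : ℕ → ℝ} (hrt : ∀ k, r k ≤ t (k + 1))
    (hU : T.IsNode k U) {c : Fin j → Set X} (hc : T.chainWeight j k U x c ≠ 0)
    (hx : infDist x U ≤ t k) :
    T.IsNode (k + j) (chainEnd j U c) ∧ infDist x (chainEnd j U c) ≤ t (k + j) := by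
  induction j generalizing k U with
  | zero => exact ⟨hU, hx⟩
  | succ j ih =>
    obtain ⟨hp, hc'⟩ := mul_ne_zero_iff.1 hc
    obtain ⟨hcU, hxc⟩ := T.levelPartition_ne_zero hp
    rw [show k + (j + 1) = k + 1 + j by omega]
    exact ih (T.isNode_of_mem_child hU hcU) hc' (hxc.le.trans (hrt k))

lemma finsum_abs_chainWeight_cons_sub_le (hU : T.IsNode k U) (V : Set X) (x y : X) :
    ∑ᶠ c : Fin j → Set X, |T.levelPartition k U x V * T.chainWeight j (k + 1) V x c -
        T.levelPartition k U y V * T.chainWeight j (k + 1) V y c| ≤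
      |T.levelPartition k U x V - T.levelPartition k U y V| +
        T.levelPartition k U x V *
          ∑ᶠ c, |T.chainWeight j (k + 1) V x c - T.chainWeight j (k + 1) V y c| := by
  by_cases hV : T.IsNode (k + 1) V
  · refine (finsum_abs_mul_sub_mul_le (T.hasFiniteSupport_chainWeight hV x)
      (T.hasFiniteSupport_chainWeight hV y) T.chainWeight_nonneg).trans ?_
    rw [abs_of_nonneg T.levelPartition_nonneg]
    gcongr
    exact mul_le_of_le_one_right (abs_nonneg _) (T.finsum_chainWeight_le_one hV y)
  · have h0 : ∀ z, T.levelPartition k U z V = 0 := fun z => by_contra fun h =>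
      hV (T.isNode_of_mem_child hU (T.levelPartition_ne_zero h).1)
    simp [h0]

lemma hasFiniteSupport_finsum_abs_chainWeight_cons_sub (hU : T.IsNode k U) (x y : X) :
    HasFiniteSupport fun V => ∑ᶠ c : Fin j → Set X,
      |T.levelPartition k U x V * T.chainWeight j (k + 1) V x c -
        T.levelPartition k U y V * T.chainWeight j (k + 1) V y c| := by
  refine ((T.hasFiniteSupport_levelPartition hU x).union
    (T.hasFiniteSupport_levelPartition hU y)).subset fun V hV => ?_
  by_contra h
  simp only [mem_union, mem_support, not_or, not_not] at h
  simp [h.1, h.2] at hV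

/-- The Lipschitz constants of the levels add up along a chain:
`∑_{i ≥ k} ε / 2 ^ (i + 2) = ε / 2 ^ (k + 1)`. -/
lemma finsum_abs_chainWeight_sub_le {t : ℕ → ℝ} {ε d₀ : ℝ} (hε : 0 ≤ ε)
    (hrt : ∀ k, r k ≤ t (k + 1)) (hgap : ∀ k, d₀ < r k - t k)
    (hlip : ∀ k, 4 * n k / (r k - t k) ≤ ε / 2 ^ (k + 2))
    (hU : T.IsNode k U) (hx : infDist x U ≤ t k) (hxy : dist x y ≤ d₀) :
    ∑ᶠ c, |T.chainWeight j k U x c - T.chainWeight j k U y c| ≤ ε / 2 ^ (k + 1) * dist x y := by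
  have hεd : ∀ k, 0 ≤ ε / 2 ^ k * dist x y := fun k => by positivity
  induction j generalizing k U with
  | zero => simpa [chainWeight] using hεd (k + 1)
  | succ j ih =>
    have hpx := T.hasFiniteSupport_levelPartition hU x
    have hpy := T.hasFiniteSupport_levelPartition hU y
    have hwx := T.hasFiniteSupport_chainWeight (j := j + 1) hU x
    have hwy := T.hasFiniteSupport_chainWeight (j := j + 1) hU y
    rw [finsum_fin_succ_pi (by fun_prop (disch := simp))]
    simp_rw [chainWeight_cons]
    calc _ ≤ ∑ᶠ V, (|T.levelPartition k U x V - T.levelPartition k U y V| +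
            T.levelPartition k U x V * (ε / 2 ^ (k + 2) * dist x y)) := by
          refine finsum_le_finsum' (T.hasFiniteSupport_finsum_abs_chainWeight_cons_sub hU x y)
            (by fun_prop (disch := simp)) fun V =>
            (T.finsum_abs_chainWeight_cons_sub_le hU V x y).trans ?_
          by_cases hV : T.levelPartition k U x V = 0
          · simp [hV]
          obtain ⟨hVU, hxV⟩ := T.levelPartition_ne_zero hV
          gcongr
          · exact T.levelPartition_nonneg
          · exact ih (T.isNode_of_mem_child hU hVU) (hxV.le.trans (hrt k))
      _ = ∑ᶠ V, |T.levelPartition k U x V - T.levelPartition k U y V| +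
            (∑ᶠ V, T.levelPartition k U x V) * (ε / 2 ^ (k + 2) * dist x y) := by
          rw [finsum_add_distrib (by fun_prop (disch := simp)) (by fun_prop), finsum_mul]
      _ ≤ 4 * n k / (r k - t k) * dist x y + 1 * (ε / 2 ^ (k + 2) * dist x y) := by
          gcongr
          · exact T.finsum_abs_levelPartition_sub_le hU
              (by linarith [hgap k, dist_nonneg (x := x) (y := y)]) (by linarith)
              (by linarith [hgap k])
          · exact T.finsum_levelPartition_le_one
      _ ≤ ε / 2 ^ (k + 2) * dist x y + 1 * (ε / 2 ^ (k + 2) * dist x y) := by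
          gcongr ?_ * _ + _
          exact hlip k
      _ = ε / 2 ^ (k + 1) * dist x y := by ring

/-- Siblings of the same colour are disjoint, so a point of each set of a chain together with the
colour of that set determines the chain. -/
noncomputable def chainTag [Nonempty X] :
    (j : ℕ) → ℕ → Set X → (Fin j → Set X) → Fin j → X × ℕ
  | 0, _, _, _ => Fin.elim0
  | j + 1, k, U, c => Fin.cons (Classical.epsilon (· ∈ c 0), T.color k U (c 0))
      (chainTag j (k + 1) (c 0) (Fin.tail c))

lemma chainTag_injOn [Nonempty X] (hr : ∀ k, 0 ≤ r k) (hU : T.IsNode k U) :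
    InjOn (T.chainTag j k U) {c | ∃ x, T.chainWeight j k U x c ≠ 0} := by
  induction j generalizing k U with
  | zero => exact fun c _ c' _ _ => Subsingleton.elim c c'
  | succ j ih =>
    rintro c ⟨x, hx⟩ c' ⟨x', hx'⟩ h
    obtain ⟨hpx, hwx⟩ := mul_ne_zero_iff.1 hx
    obtain ⟨hpx', hwx'⟩ := mul_ne_zero_iff.1 hx'
    have hc := (T.levelPartition_ne_zero hpx).1
    have hc' := (T.levelPartition_ne_zero hpx').1
    obtain ⟨hhead, htail⟩ := Fin.cons_inj.1 h
    obtain ⟨hpt, hcol⟩ := Prod.mk_inj.1 hhead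
    have hC := T.isSeparatedColoring hU
    have h0 : c 0 = c' 0 := by
      by_contra hne
      have := hC.lt_dist _ hc _ hc' hne hcol _ (Classical.epsilon_spec (p := (· ∈ c 0))
        (hC.nonempty _ hc)) _ (Classical.epsilon_spec (p := (· ∈ c' 0)) (hC.nonempty _ hc'))
      rw [hpt, dist_self] at this
      linarith [hr k]
    rw [← Fin.cons_self_tail c, ← Fin.cons_self_tail c', h0]
    congr 1
    rw [h0] at hc hwx htail
    exact ih (T.isNode_of_mem_child hU hc) ⟨x, hwx⟩ ⟨x', hwx'⟩ htail

lemma mk_chainSupport_le [Nonempty X] (hr : ∀ k, 0 ≤ r k) (hU : T.IsNode k U) :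
    Cardinal.mk {c | ∃ x, T.chainWeight j k U x c ≠ 0} ≤ Cardinal.mk (X × ℕ) :=
  (Cardinal.mk_le_of_injective
    (List.ofFn_injective.comp (T.chainTag_injOn hr hU).injective)).trans_eq
      (Cardinal.mk_list_eq_mk _)

lemma partUnityOn_chainWeight {t : ℕ → ℝ} (htr : ∀ k, t k < r k) (hrt : ∀ k, r k ≤ t (k + 1))
    (ht : 0 ≤ t 0) : PartUnityOn (T.chainWeight j 0 univ) univ := fun x _ =>
  ⟨T.chainWeight_nonneg, T.hasFiniteSupport_chainWeight T.isNode_zero_univ x,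
    T.finsum_chainWeight_eq_one htr hrt T.isNode_zero_univ
      ((infDist_zero_of_mem (mem_univ x)).trans_le ht)⟩

lemma lipschitzEpsOn_chainWeight {t : ℕ → ℝ} {ε : ℝ} (hε : 0 < ε) (hrt : ∀ k, r k ≤ t (k + 1))
    (ht : 0 ≤ t 0) (hgap : ∀ k, 2 / ε < r k - t k)
    (hlip : ∀ k, 4 * n k / (r k - t k) ≤ ε / 2 ^ (k + 2)) :
    LipschitzEpsOn ε (T.chainWeight j 0 univ) univ := by
  intro x _ y _
  rcases le_or_gt (dist x y) (2 / ε) with h | h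
  · have hxy := T.finsum_abs_chainWeight_sub_le (j := j) hε.le hrt hgap hlip T.isNode_zero_univ
      ((infDist_zero_of_mem (mem_univ x)).trans_le ht) h
    simp only [zero_add, pow_one] at hxy
    unfold l1dist
    nlinarith [dist_nonneg (x := x) (y := y)]
  · have hx := T.hasFiniteSupport_chainWeight (j := j) T.isNode_zero_univ x
    have hy := T.hasFiniteSupport_chainWeight (j := j) T.isNode_zero_univ y
    calc l1dist _ _ ≤ ∑ᶠ c, T.chainWeight j 0 univ x c + ∑ᶠ c, T.chainWeight j 0 univ y c :=
          finsum_abs_sub_le_add hx hy T.chainWeight_nonneg T.chainWeight_nonneg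
      _ ≤ 1 + 1 := add_le_add (T.finsum_chainWeight_le_one T.isNode_zero_univ x)
          (T.finsum_chainWeight_le_one T.isNode_zero_univ y)
      _ ≤ ε * dist x y + ε := by
          rw [div_lt_iff₀' hε] at h
          linarith

lemma coboundedOn_chainWeight {t : ℕ → ℝ} {m : ℕ} {M : ℝ} (hrt : ∀ k, r k ≤ t (k + 1))
    (ht : 0 ≤ t 0) (hM : 0 ≤ M) (hm : ∀ U, T.IsNode m U → ediam U ≤ ENNReal.ofReal M) :
    CoboundedOn (M + 2 * (t m + 1)) (T.chainWeight m 0 univ) univ := by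
  intro c
  have hend : ∀ x, T.chainWeight m 0 univ x c ≠ 0 →
      T.IsNode m (chainEnd m univ c) ∧ infDist x (chainEnd m univ c) ≤ t m := fun x hx => by
    simpa using T.isNode_chainEnd_of_chainWeight_ne_zero hrt T.isNode_zero_univ hx
      ((infDist_zero_of_mem (mem_univ x)).trans_le ht)
  rcases eq_empty_or_nonempty {x ∈ univ | 0 < T.chainWeight m 0 univ x c} with h | ⟨x₀, -, hx₀⟩
  · rw [h]
    exact ediam_empty.trans_le zero_le
  have hnode := (hend x₀ hx₀.ne').1
  exact ediam_le_of_forall_infDist_le (T.nonempty hnode) (hm _ hnode) hM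
    fun x hx => (hend x hx.2.ne').2

end RefinementTree

lemma exists_scales (n : ℕ → ℕ) {ε : ℝ} (hε : 0 < ε) :
    ∃ t : ℕ → ℝ, (∀ k, 0 ≤ t k) ∧ (∀ k, 2 / ε < t (k + 1) - t k) ∧
      ∀ k, 4 * n k / (t (k + 1) - t k) ≤ ε / 2 ^ (k + 2) := by
  refine ⟨fun k => ∑ i ∈ Finset.range k, (2 ^ (i + 4) * n i + 3) / ε,
    fun k => Finset.sum_nonneg fun i _ => by positivity, fun k => ?_, fun k => ?_⟩ <;>
    simp only [Finset.sum_range_succ, add_sub_cancel_left]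
  · gcongr
    linarith [(by positivity : (0 : ℝ) ≤ 2 ^ (k + 4) * n k)]
  · rw [div_div_eq_mul_div, div_le_div_iff₀ (by positivity) (by positivity),
      show (2 : ℝ) ^ (k + 4) = 4 * 2 ^ (k + 2) by ring]
    nlinarith

/-- If `X` is of countable asymptotic dimension, then for every set `S`
of cardinality bigger than `card(X × ℕ)` and every `ε > 0` there is an `(ε,ε)`-Lipschitz
partition of unity `g : X → Δ(S)` that is `K`-cobounded for some `K > 0`. -/
theorem stmt15 {X : Type u} [MetricSpace X] (hcad : CountableAsdim X) :
    ∀ S : Type u, Cardinal.mk (X × ℕ) < Cardinal.mk S → ∀ ε > (0:ℝ),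
      ∃ g : X → S → ℝ, PartUnityOn g Set.univ ∧ LipschitzEpsOn ε g Set.univ ∧
        ∃ K : ℝ, 0 < K ∧ CoboundedOn K g Set.univ := by
  intro S hS ε hε
  rcases isEmpty_or_nonempty X with hX | hX
  · refine ⟨0, isEmptyElim, isEmptyElim, 1, one_pos, fun v => ?_⟩
    rw [eq_empty_of_isEmpty {x | x ∈ univ ∧ 0 < (0 : X → S → ℝ) x v}]
    exact ediam_empty.trans_le zero_le
  obtain ⟨n, htree⟩ := hcad.exists_refinementTree
  obtain ⟨t, ht, hgap, hlip⟩ := exists_scales n hε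
  obtain ⟨T, m, M, hM, hm⟩ := htree fun k => t (k + 1)
  have hrt : ∀ k, t (k + 1) ≤ t (k + 1) := fun k => le_rfl
  have htr : ∀ k, t k < t (k + 1) := fun k => by linarith [hgap k, div_pos two_pos hε]
  obtain ⟨ι⟩ := (Cardinal.le_def _ _).1
    ((T.mk_chainSupport_le (j := m) (fun k => ht (k + 1)) T.isNode_zero_univ).trans hS.le)
  have hs : ∀ x, support (T.chainWeight m 0 univ x) ⊆
      {c | ∃ x, T.chainWeight m 0 univ x c ≠ 0} := fun x c hc => ⟨x, hc⟩
  exact ⟨_, (T.partUnityOn_chainWeight htr hrt (ht 0)).extend ι.injective hs,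
    (T.lipschitzEpsOn_chainWeight hε hrt (ht 0) hgap hlip).extend ι.injective hs, _,
    by linarith [ht m], (T.coboundedOn_chainWeight hrt (ht 0) hM.le hm).extend ι.injective⟩
end
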